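/- arXiv:2506.02136 — 10 statements merged into one kernel-verified Lean document; each statement's English description precedes it below -/
import Mathlib

section
/- Let (X, 𝓑, m) be a σ-finite measure space, μ a probability measure on (X, 𝓑), C a subcone of L¹₊(m) such that the additive semigroup ⟨C⟩ generated by C is dense in L¹₊(m), (f_t)_{t ≥ 0} a family of measurable maps f_t : X → X, and g : X → ℝ a bounded measurable function. Suppose that for every m-absolutely continuous probability measure ν with dν/dm ∈ C, one has ∫ g d(f_t ν) → ∫ g dμ as t → ∞, where f_t ν denotes the pushforward of ν by f_t. Then ∫ g d(f_t ν) → ∫ g dμ as t → ∞ for every m-absolutely continuous probability measure ν. -/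
/-!
For each `t` the functional `h ↦ ∫ g ∘ f_t · h ∂m` on `L¹(m)` is linear and bounded by `sup |g|`,
uniformly in `t`, and `∫ g d(f_t ν)` is its value at the density `dν/dm`. Hence the set of
integrable `h` for which it tends to `(∫ h ∂m) · ∫ g dμ` is closed under addition, scaling and
`L¹`-approximation. It contains every `h ∈ C` (normalize to mass one and apply the hypothesis),
hence `⟨C⟩`, hence by density every probability density `dν/dm`.
-/

open MeasureTheory Filter Topology

theorem tendsto_of_forall_dist_lt {α β : Type*} [PseudoMetricSpace β] {l : Filter α}
    {F : α → β} {a : β}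
    (happrox : ∀ ε > 0, ∃ G : α → β, ∃ b, Tendsto G l (𝓝 b) ∧ dist b a < ε ∧
      ∀ᶠ t in l, dist (F t) (G t) < ε) :
    Tendsto F l (𝓝 a) := by
  refine Metric.tendsto_nhds.2 fun ε hε => ?_
  obtain ⟨G, b, hG, hba, hFG⟩ := happrox (ε / 3) (by positivity)
  filter_upwards [hFG, Metric.tendsto_nhds.1 hG (ε / 3) (by positivity)] with t hFGt hGt
  calc dist (F t) a ≤ dist (F t) (G t) + dist (G t) b + dist b a := dist_triangle4 _ _ _ _
    _ < ε := by linarith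

section ChangeOfVariables

variable {X Y : Type*} [MeasurableSpace X] [MeasurableSpace Y] {m : Measure X} {φ : X → Y}
  {g : Y → ℝ}

theorem integral_map_withDensity_ofReal (hφ : Measurable φ) (hg : Measurable g) {h : X → ℝ}
    (hh : AEMeasurable h m) (h_nonneg : 0 ≤ h) :
    ∫ y, g y ∂(m.withDensity fun x => ENNReal.ofReal (h x)).map φ = ∫ x, g (φ x) * h x ∂m := by
  rw [integral_map hφ.aemeasurable hg.aestronglyMeasurable,
    integral_withDensity_eq_integral_toReal_smul₀ hh.ennreal_ofReal
      (ae_of_all _ fun _ => ENNReal.ofReal_lt_top)]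
  simp only [ENNReal.toReal_ofReal (h_nonneg _), smul_eq_mul, mul_comm]

theorem integral_map_eq_integral_mul_rnDeriv {ν : Measure X} [SigmaFinite ν]
    [ν.HaveLebesgueDecomposition m] (hν : ν ≪ m) (hφ : Measurable φ) (hg : Measurable g) :
    ∫ y, g y ∂ν.map φ = ∫ x, g (φ x) * (ν.rnDeriv m x).toReal ∂m := by
  rw [integral_map hφ.aemeasurable hg.aestronglyMeasurable, ← integral_toReal_rnDeriv_mul hν]
  simp only [mul_comm]

end ChangeOfVariables

theorem isProbabilityMeasure_withDensity_ofReal {X : Type*} [MeasurableSpace X] {m : Measure X}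
    {h : X → ℝ} (hh : Integrable h m) (h_nonneg : 0 ≤ h) (h_one : ∫ x, h x ∂m = 1) :
    IsProbabilityMeasure (m.withDensity fun x => ENNReal.ofReal (h x)) := by
  constructor
  rw [withDensity_apply _ MeasurableSet.univ, setLIntegral_univ,
    ← ofReal_integral_eq_lintegral_ofReal hh (ae_of_all _ h_nonneg), h_one, ENNReal.ofReal_one]

theorem abs_integral_mul_le {X : Type*} [MeasurableSpace X] {m : Measure X} {v w : X → ℝ}
    {M : ℝ} (hv : AEStronglyMeasurable v m) (hvM : ∀ x, |v x| ≤ M) (hw : Integrable w m) :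
    |∫ x, v x * w x ∂m| ≤ M * ∫ x, |w x| ∂m := by
  have hvw : Integrable (fun x => v x * w x) m :=
    hw.bdd_mul hv (ae_of_all _ fun x => by simpa [Real.norm_eq_abs] using hvM x)
  calc |∫ x, v x * w x ∂m| ≤ ∫ x, |v x * w x| ∂m := abs_integral_le_integral_abs
    _ ≤ ∫ x, M * |w x| ∂m := integral_mono hvw.abs (hw.abs.const_mul M) fun x => by
        rw [abs_mul]; exact mul_le_mul_of_nonneg_right (hvM x) (abs_nonneg _)
    _ = M * ∫ x, |w x| ∂m := integral_const_mul _ _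

section ConvergentDensities

variable {X ι : Type*} [MeasurableSpace X] {m : Measure X} {u : ι → X → ℝ} {l : Filter ι}
  {L : ℝ}

/-- For `u t = g ∘ f t` and `∫ h ∂m = 1`, membership says `∫ g d(f_t (h • m)) → L`. -/
def convergentDensities (m : Measure X) (u : ι → X → ℝ) (l : Filter ι) (L : ℝ) :
    Set (X → ℝ) :=
  {h | Integrable h m ∧ Tendsto (fun i => ∫ x, u i x * h x ∂m) l (𝓝 ((∫ x, h x ∂m) * L))}

theorem zero_mem_convergentDensities : (0 : X → ℝ) ∈ convergentDensities m u l L :=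
  ⟨integrable_zero _ _ _, by simpa using tendsto_const_nhds⟩

theorem mem_convergentDensities_of_ae_eq {h h' : X → ℝ} (hh : h ∈ convergentDensities m u l L)
    (hae : h =ᵐ[m] h') : h' ∈ convergentDensities m u l L := by
  refine ⟨hh.1.congr hae, ?_⟩
  rw [← integral_congr_ae hae]
  refine hh.2.congr fun i => integral_congr_ae ?_
  filter_upwards [hae] with x hx
  rw [hx]

theorem smul_mem_convergentDensities {h : X → ℝ} (c : ℝ) (hh : h ∈ convergentDensities m u l L) :
    c • h ∈ convergentDensities m u l L := by
  refine ⟨hh.1.smul c, ?_⟩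
  simp only [Pi.smul_apply, smul_eq_mul, mul_left_comm _ c, integral_const_mul, mul_assoc]
  exact hh.2.const_mul c

variable {M : ℝ}

theorem add_mem_convergentDensities (hu : ∀ᶠ i in l, AEStronglyMeasurable (u i) m)
    (hub : ∀ i x, |u i x| ≤ M) {h h' : X → ℝ} (hh : h ∈ convergentDensities m u l L)
    (hh' : h' ∈ convergentDensities m u l L) : h + h' ∈ convergentDensities m u l L := by
  refine ⟨hh.1.add hh'.1, ?_⟩
  have hbound : ∀ i, ∀ᵐ x ∂m, ‖u i x‖ ≤ M := fun i =>
    ae_of_all _ fun x => by simpa [Real.norm_eq_abs] using hub i x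
  simp only [Pi.add_apply, integral_add hh.1 hh'.1, add_mul]
  refine (hh.2.add hh'.2).congr' ?_
  filter_upwards [hu] with i hui
  simp only [mul_add]
  rw [integral_add (hh.1.bdd_mul hui (hbound i)) (hh'.1.bdd_mul hui (hbound i))]

theorem closure_subset_convergentDensities (hu : ∀ᶠ i in l, AEStronglyMeasurable (u i) m)
    (hub : ∀ i x, |u i x| ≤ M) {C : Set (X → ℝ)}
    (hC : C ⊆ convergentDensities m u l L) :
    (AddSubsemigroup.closure C : Set (X → ℝ)) ⊆ convergentDensities m u l L :=
  AddSubsemigroup.closure_le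
    (S := ⟨_, fun ha hb => add_mem_convergentDensities hu hub ha hb⟩).2 hC

theorem mem_convergentDensities_of_approx (hu : ∀ᶠ i in l, AEStronglyMeasurable (u i) m)
    (hub : ∀ i x, |u i x| ≤ M) {h : X → ℝ} (hh : Integrable h m)
    (happrox : ∀ ε > 0, ∃ s ∈ convergentDensities m u l L, ∫ x, |h x - s x| ∂m < ε) :
    h ∈ convergentDensities m u l L := by
  refine ⟨hh, tendsto_of_forall_dist_lt fun ε hε => ?_⟩
  set K := |M| + |L| + 1
  obtain ⟨s, hs, hhs⟩ := happrox (ε / K) (by positivity)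
  have hK : K * ∫ x, |h x - s x| ∂m < ε := (lt_div_iff₀' (by positivity)).1 hhs
  have hdist : 0 ≤ ∫ x, |h x - s x| ∂m := integral_nonneg fun x => abs_nonneg _
  refine ⟨_, _, hs.2, ?_, ?_⟩
  · have hint : |∫ x, (s x - h x) ∂m| ≤ ∫ x, |h x - s x| ∂m :=
      abs_integral_le_integral_abs.trans_eq (by simp_rw [abs_sub_comm])
    rw [Real.dist_eq, ← sub_mul, ← integral_sub hs.1 hh, abs_mul]
    calc _ ≤ (∫ x, |h x - s x| ∂m) * |L| := mul_le_mul_of_nonneg_right hint (abs_nonneg L)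
      _ ≤ K * ∫ x, |h x - s x| ∂m := by nlinarith [abs_nonneg M, hdist]
      _ < ε := hK
  · filter_upwards [hu] with i hui
    have hbound := abs_integral_mul_le hui (hub i) (hh.sub hs.1)
    have hbound' : ∀ x, ‖u i x‖ ≤ M := fun x => by simpa [Real.norm_eq_abs] using hub i x
    rw [Real.dist_eq, ← integral_sub (hh.bdd_mul hui (ae_of_all _ hbound'))
      (hs.1.bdd_mul hui (ae_of_all _ hbound'))]
    simp only [← mul_sub]
    calc _ ≤ M * ∫ x, |h x - s x| ∂m := hbound
      _ ≤ K * ∫ x, |h x - s x| ∂m := by nlinarith [le_abs_self M, abs_nonneg L, hdist]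
      _ < ε := hK

theorem subset_convergentDensities_of_normalized {C : Set (X → ℝ)}
    (hC_sub : ∀ h ∈ C, Integrable h m ∧ 0 ≤ h) (hC_cone : ∀ h ∈ C, ∀ c : ℝ, 0 < c → c • h ∈ C)
    (hC_one : ∀ h ∈ C, ∫ x, h x ∂m = 1 → h ∈ convergentDensities m u l L) :
    C ⊆ convergentDensities m u l L := by
  intro h hh
  obtain ⟨hint, h_nonneg⟩ := hC_sub h hh
  rcases (integral_nonneg (μ := m) h_nonneg).eq_or_lt with hc | hc
  · exact mem_convergentDensities_of_ae_eq zero_mem_convergentDensities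
      ((integral_eq_zero_iff_of_nonneg h_nonneg hint).1 hc.symm).symm
  · have hnormalized := hC_one _ (hC_cone h hh _ (inv_pos.2 hc)) <| by
      simp only [Pi.smul_apply, smul_eq_mul, integral_const_mul, inv_mul_cancel₀ hc.ne']
    simpa only [smul_smul, mul_inv_cancel₀ hc.ne', one_smul] using
      smul_mem_convergentDensities (∫ x, h x ∂m) hnormalized

theorem mem_convergentDensities_of_tendsto_integral_map {Y : Type*} [MeasurableSpace Y]
    {f : ι → X → Y} {g : Y → ℝ} (hf : ∀ᶠ i in l, Measurable (f i)) (hg : Measurable g)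
    {h : X → ℝ} (hh : Integrable h m) (h_nonneg : 0 ≤ h) (h_one : ∫ x, h x ∂m = 1)
    (htends : Tendsto (fun i => ∫ y, g y ∂(m.withDensity fun x => ENNReal.ofReal (h x)).map (f i))
      l (𝓝 L)) :
    h ∈ convergentDensities m (fun i x => g (f i x)) l L := by
  refine ⟨hh, ?_⟩
  rw [h_one, one_mul]
  refine htends.congr' ?_
  filter_upwards [hf] with i hfi
  exact integral_map_withDensity_ofReal hfi hg hh.aemeasurable h_nonneg

end ConvergentDensities

theorem stmt_0_general {X : Type*} [MeasurableSpace X]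
    (m : Measure X) [SigmaFinite m]
    (μ : Measure X)
    (C : Set (X → ℝ))
    (hC_sub : ∀ h ∈ C, Integrable h m ∧ 0 ≤ h)
    (hC_cone : ∀ h ∈ C, ∀ c : ℝ, 0 < c → c • h ∈ C)
    (hC_dense : ∀ h : X → ℝ, Integrable h m → 0 ≤ h → ∀ ε : ℝ, 0 < ε →
      ∃ s ∈ AddSubsemigroup.closure C, ∫ x, |h x - s x| ∂m < ε)
    (f : ℝ → X → X) (hf : ∀ t : ℝ, 0 ≤ t → Measurable (f t))
    (g : X → ℝ) (hg : Measurable g) (M : ℝ) (hgb : ∀ x, |g x| ≤ M)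
    (hconv : ∀ h ∈ C, ∀ ν : Measure X, IsProbabilityMeasure ν →
      ν = m.withDensity (fun x => ENNReal.ofReal (h x)) →
      Tendsto (fun t : ℝ => ∫ x, g x ∂(ν.map (f t))) atTop (𝓝 (∫ x, g x ∂μ)))
    (ν : Measure X) (hνp : IsProbabilityMeasure ν) (hν : ν ≪ m) :
    Tendsto (fun t : ℝ => ∫ x, g x ∂(ν.map (f t))) atTop (𝓝 (∫ x, g x ∂μ)) := by
  have hf' : ∀ᶠ t in atTop, Measurable (f t) := (eventually_ge_atTop 0).mono hf
  have hu : ∀ᶠ t in atTop, AEStronglyMeasurable (fun x => g (f t x)) m :=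
    hf'.mono fun t hft => (hg.comp hft).aestronglyMeasurable
  have hub : ∀ t x, |g (f t x)| ≤ M := fun t x => hgb (f t x)
  have hCS : C ⊆ convergentDensities m (fun t x => g (f t x)) atTop (∫ x, g x ∂μ) :=
    subset_convergentDensities_of_normalized hC_sub hC_cone fun h hh h_one =>
      mem_convergentDensities_of_tendsto_integral_map hf' hg (hC_sub h hh).1 (hC_sub h hh).2 h_one
        (hconv h hh _ (isProbabilityMeasure_withDensity_ofReal (hC_sub h hh).1 (hC_sub h hh).2
          h_one) rfl)
  have hdensity := mem_convergentDensities_of_approx hu hub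
    (Measure.integrable_toReal_rnDeriv (μ := ν) (ν := m)) fun ε hε =>
      (hC_dense _ Measure.integrable_toReal_rnDeriv (fun _ => ENNReal.toReal_nonneg) ε hε).imp
        fun s hs => ⟨closure_subset_convergentDensities hu hub hCS hs.1, hs.2⟩
  have hmass : ∫ x, (ν.rnDeriv m x).toReal ∂m = 1 := by
    rw [Measure.integral_toReal_rnDeriv hν, probReal_univ]
  have hlim := hdensity.2
  rw [hmass, one_mul] at hlim
  refine hlim.congr' ?_
  filter_upwards [hf'] with t hft
  exact (integral_map_eq_integral_mul_rnDeriv hν hft hg).symm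

/-- Let `(X, 𝓑, m)` be a σ-finite measure space, `μ` a probability measure,
`C` a subcone of `L¹₊(m)` whose generated additive semigroup is dense in `L¹₊(m)`,
`(f_t)_{t ≥ 0}` a family of measurable maps, and `g` a bounded measurable function.
If `∫ g d(f_t ν) → ∫ g dμ` for every `m`-absolutely continuous probability measure with
density in `C`, then the same holds for every `m`-absolutely continuous probability
measure. -/
theorem stmt_0 {X : Type*} [MeasurableSpace X]
    (m : Measure X) [SigmaFinite m]
    (μ : Measure X) [IsProbabilityMeasure μ]
    (C : Set (X → ℝ))
    (hC_sub : ∀ h ∈ C, Integrable h m ∧ 0 ≤ h)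
    (hC_cone : ∀ h ∈ C, ∀ c : ℝ, 0 < c → c • h ∈ C)
    (hC_dense : ∀ h : X → ℝ, Integrable h m → 0 ≤ h → ∀ ε : ℝ, 0 < ε →
      ∃ s ∈ AddSubsemigroup.closure C, ∫ x, |h x - s x| ∂m < ε)
    (f : ℝ → X → X) (hf : ∀ t : ℝ, 0 ≤ t → Measurable (f t))
    (g : X → ℝ) (hg : Measurable g) (M : ℝ) (hgb : ∀ x, |g x| ≤ M)
    (hconv : ∀ h ∈ C, ∀ ν : Measure X, IsProbabilityMeasure ν →
      ν = m.withDensity (fun x => ENNReal.ofReal (h x)) →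
      Tendsto (fun t : ℝ => ∫ x, g x ∂(ν.map (f t))) atTop (𝓝 (∫ x, g x ∂μ)))
    (ν : Measure X) (hνp : IsProbabilityMeasure ν) (hν : ν ≪ m) :
    Tendsto (fun t : ℝ => ∫ x, g x ∂(ν.map (f t))) atTop (𝓝 (∫ x, g x ∂μ)) :=
  stmt_0_general m μ C hC_sub hC_cone hC_dense f hf g hg M hgb hconv ν hνp hν
end

section
/- Let X be a separable metric space and (f^t)_{t ≥ 0} a semiflow of maps f^t : X → X such that (t, x) ↦ f^t x is continuous. Let μ be a Borel probability measure on X. If Basin(μ) ≠ ∅, then μ is an invariant measure, i.e. f^t μ = μ for all t ≥ 0. -/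
/-!
Fix `x` in the basin and a test function `g`. The Cesàro averages of `t ↦ g (f^t x)` tend to
`∫ g dμ`, and by the semiflow property the averages of `t ↦ (g ∘ f^s) (f^t x) = g (f^(t+s) x)`
tend to `∫ g ∘ f^s dμ`. A time shift by `s` changes a Cesàro average only by `O(1/T)`, so
`∫ g ∘ f^s dμ = ∫ g dμ` for every bounded continuous `g`, which determines `f^s μ = μ`.
-/

open MeasureTheory Filter Topology Set

/-- The basin of a Borel probability measure `μ`: the set of points `x` such that the
empirical measures `(1/T) ∫₀^T δ_{f^t x} dt` converge weakly to `μ` as `T → ∞`,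
expressed via test integrals against bounded continuous functions. -/
def basinOf {X : Type*} [TopologicalSpace X] [MeasurableSpace X]
    (f : ℝ → X → X) (μ : Measure X) : Set X :=
  {x | ∀ g : BoundedContinuousFunction X ℝ,
    Tendsto (fun T : ℝ => (1 / T) * ∫ t in (0:ℝ)..T, g (f t x)) atTop
      (𝓝 (∫ y, g y ∂μ))}

theorem tendsto_average_comp_add_right {ψ : ℝ → ℝ} {L s : ℝ}
    (hψ : ∀ T, 0 ≤ T → IntervalIntegrable ψ volume 0 T) (hs : 0 ≤ s)
    (h : Tendsto (fun T => (1 / T) * ∫ t in (0:ℝ)..T, ψ t) atTop (𝓝 L)) :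
    Tendsto (fun T => (1 / T) * ∫ t in (0:ℝ)..T, ψ (t + s)) atTop (𝓝 L) := by
  have h_ratio : Tendsto (fun T : ℝ => (T + s) / T) atTop (𝓝 1) := by
    simpa using (tendsto_const_nhds (x := (1 : ℝ))).add
      ((tendsto_inv_atTop_zero (𝕜 := ℝ)).const_mul s) |>.congr'
        (by filter_upwards [eventually_gt_atTop (0 : ℝ)] with T hT; field_simp)
  have h_head : Tendsto (fun T : ℝ => (1 / T) * ∫ t in (0:ℝ)..s, ψ t) atTop (𝓝 0) := by
    simpa using (tendsto_inv_atTop_zero (𝕜 := ℝ)).mul_const (∫ t in (0:ℝ)..s, ψ t)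
  have h_shifted := h.comp (tendsto_atTop_add_const_right atTop s tendsto_id)
  have h_lim : Tendsto (fun T : ℝ => (T + s) / T * ((1 / (T + s)) * ∫ t in (0:ℝ)..(T + s), ψ t)
      - (1 / T) * ∫ t in (0:ℝ)..s, ψ t) atTop (𝓝 L) := by
    simpa using (h_ratio.mul h_shifted).sub h_head
  refine h_lim.congr' ?_
  filter_upwards [eventually_gt_atTop (0 : ℝ)] with T hT
  have hTs : 0 < T + s := by linarith
  rw [intervalIntegral.integral_comp_add_right ψ s, zero_add,
    ← intervalIntegral.integral_add_adjacent_intervals (hψ s hs)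
      ((hψ s hs).symm.trans (hψ _ hTs.le))]
  field_simp
  ring

section Semiflow

variable {X : Type*} [TopologicalSpace X] {f : ℝ → X → X}

theorem continuous_apply_of_continuousOn_uncurry
    (hcont : ContinuousOn (fun p : ℝ × X => f p.1 p.2) (Ici 0 ×ˢ univ))
    {s : ℝ} (hs : 0 ≤ s) : Continuous (f s) :=
  hcont.comp_continuous (continuous_const.prodMk continuous_id) fun y => ⟨hs, mem_univ y⟩

theorem integral_comp_eq_integral_of_mem_basinOf [MeasurableSpace X] {μ : Measure X} {x : X}
    (hx : x ∈ basinOf f μ) (hfadd : ∀ s t : ℝ, 0 ≤ s → 0 ≤ t → f (s + t) = f s ∘ f t)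
    (hcont : ContinuousOn (fun p : ℝ × X => f p.1 p.2) (Ici 0 ×ˢ univ))
    {s : ℝ} (hs : 0 ≤ s) (g : BoundedContinuousFunction X ℝ) :
    ∫ y, g (f s y) ∂μ = ∫ y, g y ∂μ := by
  have h_orbit : ContinuousOn (fun t => g (f t x)) (Ici 0) :=
    g.continuous.comp_continuousOn <|
      hcont.comp (continuous_id.prodMk continuous_const).continuousOn fun t ht => ⟨ht, mem_univ x⟩
  have h_shift : Tendsto (fun T => (1 / T) * ∫ t in (0:ℝ)..T, g (f (t + s) x)) atTop
      (𝓝 (∫ y, g y ∂μ)) :=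
    tendsto_average_comp_add_right (fun T hT =>
        (h_orbit.mono (by simp [uIcc_of_le hT, Icc_subset_Ici_self])).intervalIntegrable)
      hs (hx g)
  let g_s := g.compContinuous ⟨f s, continuous_apply_of_continuousOn_uncurry hcont hs⟩
  refine tendsto_nhds_unique ((hx g_s).congr' ?_) h_shift
  filter_upwards [eventually_ge_atTop (0 : ℝ)] with T hT
  congr 1
  refine intervalIntegral.integral_congr fun t ht => ?_
  rw [uIcc_of_le hT] at ht
  simp [g_s, add_comm t s, hfadd s t hs ht.1]

end Semiflow

theorem stmt_3_general {X : Type*} [MetricSpace X]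
    [MeasurableSpace X] [BorelSpace X]
    (f : ℝ → X → X)
    (hfadd : ∀ s t : ℝ, 0 ≤ s → 0 ≤ t → f (s + t) = f s ∘ f t)
    (hcont : ContinuousOn (fun p : ℝ × X => f p.1 p.2) (Set.Ici 0 ×ˢ Set.univ))
    (μ : Measure X) [IsProbabilityMeasure μ]
    (hne : (basinOf f μ).Nonempty) :
    ∀ t : ℝ, 0 ≤ t → μ.map (f t) = μ := by
  obtain ⟨x, hx⟩ := hne
  intro t ht
  have hft : Measurable (f t) := (continuous_apply_of_continuousOn_uncurry hcont ht).measurable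
  have : IsProbabilityMeasure (μ.map (f t)) := Measure.isProbabilityMeasure_map hft.aemeasurable
  refine ext_of_forall_integral_eq_of_IsFiniteMeasure fun g => ?_
  rw [integral_map hft.aemeasurable g.continuous.aestronglyMeasurable]
  exact integral_comp_eq_integral_of_mem_basinOf hx hfadd hcont ht g

/-- Let `X` be a separable metric space and `(f^t)_{t ≥ 0}` a semiflow
such that `(t, x) ↦ f^t x` is continuous. Let `μ` be a Borel probability measure on `X`.
If `Basin(μ) ≠ ∅`, then `μ` is invariant: `f^t μ = μ` for all `t ≥ 0`. -/
theorem stmt_3 {X : Type*} [MetricSpace X] [TopologicalSpace.SeparableSpace X]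
    [MeasurableSpace X] [BorelSpace X]
    (f : ℝ → X → X)
    (hf0 : f 0 = id)
    (hfadd : ∀ s t : ℝ, 0 ≤ s → 0 ≤ t → f (s + t) = f s ∘ f t)
    (hcont : ContinuousOn (fun p : ℝ × X => f p.1 p.2) (Set.Ici 0 ×ˢ Set.univ))
    (μ : Measure X) [IsProbabilityMeasure μ]
    (hne : (basinOf f μ).Nonempty) :
    ∀ t : ℝ, 0 ≤ t → μ.map (f t) = μ :=
  stmt_3_general f hfadd hcont μ hne
end

section
/- Under the standing setup, let μ be a Borel probability measure on X with compact support A. Then μ is an attracting measure if and only if there is an open neighbourhood U of A with m(U) < ∞ such that for all bounded continuous functions g₁, g₂ : X → ℝ, the operational correlation ∫_U g₁(x) g₂(f^t x) m(dx) − (∫_U g₁ dm)(∫_A g₂ dμ) tends to 0 as t → ∞. -/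
open MeasureTheory Filter Topology Set
open scoped NNReal ENNReal

/-- The (topological) support of a measure: the set of points all of whose open
neighbourhoods have positive measure. -/
def msupp {X : Type*} [TopologicalSpace X] [MeasurableSpace X] (μ : Measure X) : Set X :=
  {x | ∀ U : Set X, IsOpen U → x ∈ U → 0 < μ U}

/-- `μ` is an attracting measure (w.r.t. the reference measure `m` and semiflow `f`):
it is a compactly supported Borel probability measure whose support admits an open
neighbourhood `U` such that every `m`-absolutely continuous probability measure `ν` with
`ν U = 1` satisfies `f^t ν → μ` weakly as `t → ∞`. -/
def AttractingMeasure {X : Type*} [TopologicalSpace X] [MeasurableSpace X]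
    (m : Measure X) (f : ℝ → X → X) (μ : Measure X) : Prop :=
  IsProbabilityMeasure μ ∧ IsCompact (msupp μ) ∧
    ∃ U : Set X, IsOpen U ∧ msupp μ ⊆ U ∧
      ∀ ν : Measure X, IsProbabilityMeasure ν → ν ≪ m → ν U = 1 →
        ∀ g : BoundedContinuousFunction X ℝ,
          Tendsto (fun t : ℝ => ∫ x, g x ∂(ν.map (f t))) atTop (𝓝 (∫ x, g x ∂μ))

/-!
Both directions compare `∫ g d(f^t ν)` with the correlation integral `∫_U ρ · (g ∘ f^t) dm`,
where `ρ = dν/dm`. If `μ` attracts, the normalised measures `g₁⁺ · m|_U` and `g₁⁻ · m|_U` are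
attracted to `μ`, which gives the decay of correlations. Conversely, for `t ≥ 0` the correlation
integrals are linear in `ρ` and bounded by `‖g‖ ‖ρ‖₁` uniformly in `t`, so their convergence for
bounded continuous `ρ = g₁` extends to all of `L¹(m|_U)`, where `Cᵇ` is dense because `m|_U` is
finite; applying this to the density of `ν` gives attraction.
-/

open scoped BoundedContinuousFunction

lemma msupp_eq_support {X : Type*} [TopologicalSpace X] [MeasurableSpace X] (μ : Measure X) :
    msupp μ = μ.support := by
  ext x
  simp only [msupp, Measure.support_eq_forall_isOpen, mem_ofPred_eq]
  exact forall_congr' fun _ => forall_comm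

lemma restrict_msupp {X : Type*} [TopologicalSpace X] [HereditarilyLindelofSpace X]
    [MeasurableSpace X] (μ : Measure X) : μ.restrict (msupp μ) = μ := by
  rw [msupp_eq_support]
  exact Measure.restrict_eq_self_of_ae_mem Measure.support_mem_ae

lemma tendsto_integral_mul_of_forall_boundedContinuous {X ι : Type*} [TopologicalSpace X]
    [NormalSpace X] [MeasurableSpace X] [BorelSpace X] {κ : Measure X} [IsFiniteMeasure κ]
    [κ.WeaklyRegular] {l : Filter ι} {φ : ι → X → ℝ} {M L : ℝ}
    (hφ : ∀ᶠ i in l, AEStronglyMeasurable (φ i) κ ∧ ∀ x, ‖φ i x‖ ≤ M)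
    (hlim : ∀ g : X →ᵇ ℝ, Tendsto (fun i => ∫ x, g x * φ i x ∂κ) l (𝓝 ((∫ x, g x ∂κ) * L)))
    {ρ : X → ℝ} (hρ : Integrable ρ κ) :
    Tendsto (fun i => ∫ x, ρ x * φ i x ∂κ) l (𝓝 ((∫ x, ρ x ∂κ) * L)) := by
  rw [Metric.tendsto_nhds]
  intro ε hε
  set C := |M| + |L| + 1
  have hC : 0 < C := by positivity
  set δ := ε / (2 * C)
  obtain ⟨g, hgρ, -⟩ := hρ.exists_boundedContinuous_integral_sub_le (show 0 < δ by positivity)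
  have hρg : Integrable (fun x => ‖ρ x - g x‖) κ := (hρ.sub (g.integrable κ)).norm
  filter_upwards [hφ, Metric.tendsto_nhds.1 (hlim g) (ε / 2) (half_pos hε)]
    with i ⟨hφm, hφM⟩ hgi
  have hM : ∀ x, ‖φ i x‖ ≤ |M| := fun x => (hφM x).trans (le_abs_self M)
  have hρφ : Integrable (fun x => ρ x * φ i x) κ := hρ.mul_bdd hφm (ae_of_all _ hM)
  have hgφ : Integrable (fun x => g x * φ i x) κ := (g.integrable κ).mul_bdd hφm (ae_of_all _ hM)
  have hφ_err : ‖(∫ x, ρ x * φ i x ∂κ) - ∫ x, g x * φ i x ∂κ‖ ≤ δ * |M| := by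
    rw [← integral_sub hρφ hgφ]
    calc ‖∫ x, ρ x * φ i x - g x * φ i x ∂κ‖ ≤ ∫ x, ‖ρ x - g x‖ * |M| ∂κ := by
          refine norm_integral_le_of_norm_le (hρg.mul_const _) (ae_of_all _ fun x => ?_)
          rw [← sub_mul, norm_mul]
          exact mul_le_mul_of_nonneg_left (hM x) (norm_nonneg _)
      _ ≤ δ * |M| := by
          rw [integral_mul_const]
          exact mul_le_mul_of_nonneg_right hgρ (abs_nonneg M)
  have hρ_err : ‖(∫ x, ρ x ∂κ) - ∫ x, g x ∂κ‖ ≤ δ := by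
    rw [← integral_sub hρ (g.integrable κ)]
    exact (norm_integral_le_integral_norm _).trans hgρ
  have hδC : δ * (|M| + |L|) ≤ ε / 2 := by
    calc δ * (|M| + |L|) ≤ δ * C := by gcongr; linarith
      _ = ε / 2 := by rw [show δ = ε / (2 * C) from rfl]; field_simp
  rw [dist_eq_norm] at hgi ⊢
  calc ‖(∫ x, ρ x * φ i x ∂κ) - (∫ x, ρ x ∂κ) * L‖
      = ‖((∫ x, ρ x * φ i x ∂κ) - ∫ x, g x * φ i x ∂κ)
          + ((∫ x, g x * φ i x ∂κ) - (∫ x, g x ∂κ) * L)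
          - ((∫ x, ρ x ∂κ) - ∫ x, g x ∂κ) * L‖ := by ring_nf
    _ ≤ δ * |M| + ‖(∫ x, g x * φ i x ∂κ) - (∫ x, g x ∂κ) * L‖ + δ * |L| := by
        refine (norm_sub_le _ _).trans ?_
        rw [norm_mul, Real.norm_eq_abs L]
        gcongr
        exact (norm_add_le _ _).trans (by gcongr)
    _ < ε := by nlinarith

section Attraction

variable {X : Type*} [TopologicalSpace X] [MeasurableSpace X] {m μ : Measure X}
  {f : ℝ → X → X} {U : Set X}

def AttractsFrom (m : Measure X) (f : ℝ → X → X) (μ : Measure X) (U : Set X) : Prop :=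
  ∀ ν : Measure X, IsProbabilityMeasure ν → ν ≪ m → ν U = 1 →
    ∀ g : X →ᵇ ℝ, Tendsto (fun t : ℝ => ∫ x, g x ∂(ν.map (f t))) atTop (𝓝 (∫ x, g x ∂μ))

lemma AttractsFrom.tendsto_integral_map (h : AttractsFrom m f μ U) (hU : MeasurableSet U)
    {ν : Measure X} [IsFiniteMeasure ν] (hνm : ν ≪ m) (hνU : ν Uᶜ = 0) (g : X →ᵇ ℝ) :
    Tendsto (fun t => ∫ x, g x ∂(ν.map (f t))) atTop (𝓝 (ν.real univ * ∫ x, g x ∂μ)) := by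
  rcases eq_zero_or_neZero ν with rfl | _
  · simp
  have hnorm := h _ inferInstance (hνm.smul_left _)
    ((prob_compl_eq_zero_iff (μ := (ν univ)⁻¹ • ν) hU).1 (by simp [hνU])) g
  simp only [Measure.map_smul, integral_smul_measure, ENNReal.toReal_inv, smul_eq_mul] at hnorm
  refine (hnorm.const_mul (ν.real univ)).congr fun t => ?_
  exact mul_inv_cancel_left₀ measureReal_univ_pos.ne' _

variable [OpensMeasurableSpace X]

lemma AttractsFrom.tendsto_setIntegral_mul_comp_of_nonneg {U₀ : Set X}
    (h : AttractsFrom m f μ U₀) (hU₀ : MeasurableSet U₀) (hU : U ⊆ U₀)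
    (hf : ∀ᶠ t in atTop, Measurable (f t)) {ρ : X → ℝ} (hρ : Integrable ρ (m.restrict U))
    (hρ0 : 0 ≤ᵐ[m.restrict U] ρ) (g : X →ᵇ ℝ) :
    Tendsto (fun t => ∫ x in U, ρ x * g (f t x) ∂m) atTop
      (𝓝 ((∫ x in U, ρ x ∂m) * ∫ x, g x ∂μ)) := by
  set ν := (m.restrict U).withDensity fun x => ENNReal.ofReal (ρ x)
  have : IsFiniteMeasure ν := isFiniteMeasure_withDensity_ofReal hρ.2
  have hνm : ν ≪ m := (withDensity_absolutelyContinuous _ _).trans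
    (Measure.absolutelyContinuous_of_le Measure.restrict_le_self)
  have hνU₀ : ν U₀ᶜ = 0 := withDensity_absolutelyContinuous _ _ (by
    rw [Measure.restrict_apply hU₀.compl, (disjoint_compl_left_iff_subset.2 hU).inter_eq,
      measure_empty])
  have hν_univ : ν.real univ = ∫ x in U, ρ x ∂m := by
    rw [measureReal_def, withDensity_apply _ MeasurableSet.univ, Measure.restrict_univ,
      integral_eq_lintegral_of_nonneg_ae hρ0 hρ.aestronglyMeasurable]
  rw [← hν_univ]
  refine (h.tendsto_integral_map hU₀ hνm hνU₀ g).congr' ?_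
  filter_upwards [hf] with t ht
  rw [integral_map ht.aemeasurable g.continuous.aestronglyMeasurable,
    integral_withDensity_eq_integral_toReal_smul₀ hρ.aemeasurable.ennreal_ofReal
      (ae_of_all _ fun _ => ENNReal.ofReal_lt_top)]
  refine integral_congr_ae (hρ0.mono fun x hx => ?_)
  simp [ENNReal.toReal_ofReal hx]

lemma AttractsFrom.tendsto_setIntegral_mul_comp {U₀ : Set X}
    (h : AttractsFrom m f μ U₀) (hU₀ : MeasurableSet U₀) (hU : U ⊆ U₀)
    (hf : ∀ᶠ t in atTop, Measurable (f t)) {ρ : X → ℝ} (hρ : Integrable ρ (m.restrict U))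
    (g : X →ᵇ ℝ) :
    Tendsto (fun t => ∫ x in U, ρ x * g (f t x) ∂m) atTop
      (𝓝 ((∫ x in U, ρ x ∂m) * ∫ x, g x ∂μ)) := by
  have hpos := h.tendsto_setIntegral_mul_comp_of_nonneg hU₀ hU hf hρ.pos_part
    (ae_of_all _ fun _ => le_max_right _ _) g
  have hneg := h.tendsto_setIntegral_mul_comp_of_nonneg hU₀ hU hf hρ.neg_part
    (ae_of_all _ fun _ => le_max_right _ _) g
  have hsplit : ∀ x, max (ρ x) 0 - max (-ρ x) 0 = ρ x := fun x =>
    max_zero_sub_max_neg_zero_eq_self (ρ x)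
  rw [← integral_congr_ae (ae_of_all _ hsplit), integral_sub hρ.pos_part hρ.neg_part, sub_mul]
  refine (hpos.sub hneg).congr' ?_
  filter_upwards [hf] with t ht
  have hgf : AEStronglyMeasurable (fun x => g (f t x)) (m.restrict U) :=
    (g.continuous.measurable.comp ht).aestronglyMeasurable
  have hbdd : ∀ᵐ x ∂(m.restrict U), ‖g (f t x)‖ ≤ ‖g‖ := ae_of_all _ fun x => g.norm_coe_le_norm _
  rw [← integral_sub (hρ.pos_part.mul_bdd hgf hbdd) (hρ.neg_part.mul_bdd hgf hbdd)]
  simp only [← sub_mul, hsplit]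

lemma attractsFrom_of_tendsto_setIntegral_mul_comp [TopologicalSpace.PseudoMetrizableSpace X]
    [BorelSpace X] (hU : MeasurableSet U) (hmU : m U < ∞)
    (hf : ∀ᶠ t in atTop, Measurable (f t))
    (hcor : ∀ g₁ g₂ : X →ᵇ ℝ, Tendsto (fun t => ∫ x in U, g₁ x * g₂ (f t x) ∂m) atTop
      (𝓝 ((∫ x in U, g₁ x ∂m) * ∫ x, g₂ x ∂μ))) :
    AttractsFrom m f μ U := by
  intro ν _ hνm hνU g
  have : Fact (m U < ∞) := ⟨hmU⟩
  have hνmU : ν ≪ m.restrict U := by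
    rw [← Measure.restrict_eq_self_of_ae_mem (μ := ν) (s := U)
      (mem_ae_iff.2 ((prob_compl_eq_zero_iff hU).2 hνU))]
    exact hνm.restrict U
  set ρ := fun x => (ν.rnDeriv (m.restrict U) x).toReal
  have hρ1 : ∫ x in U, ρ x ∂m = 1 := by
    simp [ρ, Measure.integral_toReal_rnDeriv hνmU]
  have hφ : ∀ᶠ t in atTop, AEStronglyMeasurable (fun x => g (f t x)) (m.restrict U) ∧
      ∀ x, ‖g (f t x)‖ ≤ ‖g‖ := by
    filter_upwards [hf] with t ht
    exact ⟨(g.continuous.measurable.comp ht).aestronglyMeasurable,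
      fun x => g.norm_coe_le_norm _⟩
  have hlim := tendsto_integral_mul_of_forall_boundedContinuous hφ (hcor · g)
    (Measure.integrable_toReal_rnDeriv (μ := ν))
  rw [hρ1, one_mul] at hlim
  refine hlim.congr' ?_
  filter_upwards [hf] with t ht
  rw [integral_map ht.aemeasurable g.continuous.aestronglyMeasurable,
    ← integral_rnDeriv_smul hνmU]
  rfl

end Attraction

theorem stmt_8_general {X : Type*} [MetricSpace X] [TopologicalSpace.SeparableSpace X]
    [MeasurableSpace X] [BorelSpace X]
    (m : Measure X) [IsLocallyFiniteMeasure m]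
    (f : ℝ → X → X)
    (hcont : ContinuousOn (fun p : ℝ × X => f p.1 p.2) (Set.Ici 0 ×ˢ Set.univ))
    (μ : Measure X) [IsProbabilityMeasure μ]
    (A : Set X) (hA : A = msupp μ) (hAcomp : IsCompact A) :
    AttractingMeasure m f μ ↔
      ∃ U : Set X, IsOpen U ∧ A ⊆ U ∧ m U < ⊤ ∧
        ∀ g₁ g₂ : BoundedContinuousFunction X ℝ,
          Tendsto
            (fun t : ℝ =>
              (∫ x in U, g₁ x * g₂ (f t x) ∂m) -
                (∫ x in U, g₁ x ∂m) * (∫ x in A, g₂ x ∂μ))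
            atTop (𝓝 0) := by
  have : SecondCountableTopology X := UniformSpace.secondCountable_of_separable X
  have hf : ∀ᶠ t in atTop, Measurable (f t) := by
    filter_upwards [eventually_ge_atTop 0] with t ht
    exact (hcont.comp_continuous (continuous_const.prodMk continuous_id)
      fun x => ⟨ht, mem_univ x⟩).measurable
  simp_rw [tendsto_sub_nhds_zero_iff, hA, restrict_msupp]
  constructor
  · rintro ⟨-, -, U₀, hU₀, hAU₀, hatt⟩
    obtain ⟨U₁, hAU₁, hU₁, hmU₁⟩ := (hA ▸ hAcomp).exists_open_superset_measure_lt_top m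
    have hmU : m (U₁ ∩ U₀) < ∞ := (measure_mono inter_subset_left).trans_lt hmU₁
    have : Fact (m (U₁ ∩ U₀) < ∞) := ⟨hmU⟩
    exact ⟨U₁ ∩ U₀, hU₁.inter hU₀, subset_inter hAU₁ hAU₀, hmU, fun g₁ g₂ =>
      AttractsFrom.tendsto_setIntegral_mul_comp hatt hU₀.measurableSet inter_subset_right hf
        (g₁.integrable _) g₂⟩
  · rintro ⟨U, hU, hAU, hmU, hcor⟩
    exact ⟨inferInstance, hA ▸ hAcomp, U, hU, hAU,
      attractsFrom_of_tendsto_setIntegral_mul_comp hU.measurableSet hmU hf hcor⟩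

/-- Under the standing setup, let `μ` be a Borel probability measure
with compact support `A`. Then `μ` is attracting if and only if there is an open
neighbourhood `U` of `A` with `m U < ∞` such that for all bounded continuous
`g₁, g₂ : X → ℝ`, the operational correlation
`∫_U g₁(x) g₂(f^t x) dm − (∫_U g₁ dm)(∫_A g₂ dμ)` tends to `0` as `t → ∞`. -/
theorem stmt_8 {X : Type*} [MetricSpace X] [TopologicalSpace.SeparableSpace X]
    [MeasurableSpace X] [BorelSpace X]
    (m : Measure X) [IsLocallyFiniteMeasure m] [m.IsOpenPosMeasure]
    (f : ℝ → X → X)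
    (hf0 : f 0 = id)
    (hfadd : ∀ s t : ℝ, 0 ≤ s → 0 ≤ t → f (s + t) = f s ∘ f t)
    (hcont : ContinuousOn (fun p : ℝ × X => f p.1 p.2) (Set.Ici 0 ×ˢ Set.univ))
    (hcover : ∀ x : X, ∃ V : Set X, IsOpen V ∧ x ∈ V ∧
      ∀ t : ℝ, 0 ≤ t → ∃ D : ℝ≥0, ∀ S : Set X, MeasurableSet S →
        m (V ∩ f t ⁻¹' S) ≤ (D : ℝ≥0∞) * m S)
    (μ : Measure X) [IsProbabilityMeasure μ]
    (A : Set X) (hA : A = msupp μ) (hAcomp : IsCompact A) :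
    AttractingMeasure m f μ ↔
      ∃ U : Set X, IsOpen U ∧ A ⊆ U ∧ m U < ⊤ ∧
        ∀ g₁ g₂ : BoundedContinuousFunction X ℝ,
          Tendsto
            (fun t : ℝ =>
              (∫ x in U, g₁ x * g₂ (f t x) ∂m) -
                (∫ x in U, g₁ x ∂m) * (∫ x in A, g₂ x ∂μ))
            atTop (𝓝 0) :=
  stmt_8_general m f hcont μ A hA hAcomp
end

section
/- Under the standing setup, let μ be a Borel probability measure on X whose support is an attractor. Then μ is a physical measure if and only if Basin(μ) includes m-almost all points of Basin(supp μ). -/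
open MeasureTheory Filter Topology Set Metric
open scoped NNReal ENNReal

/-- The basin of attraction of a set `A`. -/
def basinSet {X : Type*} [MetricSpace X] (f : ℝ → X → X) (A : Set X) : Set X :=
  {x | Tendsto (fun t : ℝ => infDist (f t x) A) atTop (𝓝 0)}

/-- `μ` is a physical measure (w.r.t. the reference measure `m` and semiflow `f`):
a compactly supported Borel probability measure such that `Basin(μ)` includes `m`-almost
all points of some open neighbourhood of `supp μ`. -/
def PhysicalMeasure {X : Type*} [TopologicalSpace X] [MeasurableSpace X]
    (m : Measure X) (f : ℝ → X → X) (μ : Measure X) : Prop :=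
  IsProbabilityMeasure μ ∧ IsCompact (msupp μ) ∧
    ∃ U : Set X, IsOpen U ∧ msupp μ ⊆ U ∧ m (U \ basinOf f μ) = 0

lemma norm_integral_comp_add_right_sub_integral_le {φ : ℝ → ℝ} {C s T : ℝ}
    (hφ : ContinuousOn φ (Ici 0)) (hC : ∀ t, ‖φ t‖ ≤ C) (hs : 0 ≤ s) (hT : 0 ≤ T) :
    ‖(∫ t in (0:ℝ)..T, φ (t + s)) - ∫ t in (0:ℝ)..T, φ t‖ ≤ 2 * C * s := by
  have hint {a b : ℝ} (ha : 0 ≤ a) (hb : 0 ≤ b) : IntervalIntegrable φ volume a b :=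
    (hφ.mono (ordConnected_Ici.uIcc_subset ha hb)).intervalIntegrable
  have hTs : 0 ≤ T + s := add_nonneg hT hs
  rw [intervalIntegral.integral_comp_add_right, zero_add,
    intervalIntegral.integral_interval_sub_interval_comm' (hint hs hTs) (hint le_rfl hT)
      (hint hs le_rfl)]
  have hlen : ∀ a : ℝ, |a + s - a| = s := fun a => by rw [add_sub_cancel_left, abs_of_nonneg hs]
  calc ‖(∫ t in T..T + s, φ t) - ∫ t in (0:ℝ)..s, φ t‖
      ≤ ‖∫ t in T..T + s, φ t‖ + ‖∫ t in (0:ℝ)..0 + s, φ t‖ := by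
        rw [zero_add]; exact norm_sub_le _ _
    _ ≤ C * |T + s - T| + C * |0 + s - 0| := by
        gcongr <;> exact intervalIntegral.norm_integral_le_of_norm_le_const fun t _ => hC t
    _ = 2 * C * s := by rw [hlen, hlen]; ring

lemma tendsto_average_of_tendsto_average_comp_add {φ : ℝ → ℝ} {C s L : ℝ}
    (hφ : ContinuousOn φ (Ici 0)) (hC : ∀ t, ‖φ t‖ ≤ C) (hs : 0 ≤ s)
    (h : Tendsto (fun T => (1 / T) * ∫ t in (0:ℝ)..T, φ (t + s)) atTop (𝓝 L)) :
    Tendsto (fun T => (1 / T) * ∫ t in (0:ℝ)..T, φ t) atTop (𝓝 L) := by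
  have herr : Tendsto (fun T => (1 / T) * (∫ t in (0:ℝ)..T, φ (t + s))
      - (1 / T) * ∫ t in (0:ℝ)..T, φ t) atTop (𝓝 0) := by
    refine squeeze_zero_norm' ?_ ((tendsto_const_nhds (x := 2 * C * s)).div_atTop tendsto_id)
    filter_upwards [eventually_gt_atTop (0 : ℝ)] with T hT
    rw [← mul_sub, norm_mul, norm_div, norm_one, Real.norm_of_nonneg hT.le, one_div_mul_eq_div, id]
    gcongr
    exact norm_integral_comp_add_right_sub_integral_le hφ hC hs hT.le
  simpa using h.sub herr

lemma mem_basinOf_of_apply_mem {X : Type*} [TopologicalSpace X] [MeasurableSpace X]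
    {f : ℝ → X → X}
    (hfadd : ∀ s t : ℝ, 0 ≤ s → 0 ≤ t → f (s + t) = f s ∘ f t)
    (hcont : ContinuousOn (fun p : ℝ × X => f p.1 p.2) (Set.Ici 0 ×ˢ Set.univ))
    {μ : Measure X} {x : X} {s : ℝ} (hs : 0 ≤ s) (hx : f s x ∈ basinOf f μ) :
    x ∈ basinOf f μ := by
  intro g
  have horbit : ContinuousOn (fun t => f t x) (Ici 0) :=
    hcont.comp (continuous_id.prodMk continuous_const).continuousOn fun t ht => ⟨ht, mem_univ x⟩
  refine tendsto_average_of_tendsto_average_comp_add (g.continuous.comp_continuousOn horbit)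
    (fun t => g.norm_coe_le_norm _) hs ((hx g).congr' ?_)
  filter_upwards [eventually_ge_atTop 0] with T hT
  congr 1
  refine intervalIntegral.integral_congr fun t ht => ?_
  rw [uIcc_of_le hT] at ht
  simp only [Function.comp_apply, hfadd t s ht.1 hs]

lemma measure_preimage_null_of_locally_bounded_density {X : Type*} [TopologicalSpace X]
    [SecondCountableTopology X] [MeasurableSpace X] {m : Measure X} {g : X → X}
    (hg : ∀ x : X, ∃ V : Set X, IsOpen V ∧ x ∈ V ∧ ∃ D : ℝ≥0, ∀ S : Set X,
      MeasurableSet S → m (V ∩ g ⁻¹' S) ≤ (D : ℝ≥0∞) * m S)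
    {S : Set X} (hS : m S = 0) : m (g ⁻¹' S) = 0 := by
  refine measure_mono_null (preimage_mono (subset_toMeasurable m S)) ?_
  refine measure_null_of_locally_null _ fun x _ => ?_
  obtain ⟨V, hV, hxV, D, hD⟩ := hg x
  refine ⟨V ∩ g ⁻¹' toMeasurable m S, mem_nhdsWithin.mpr ⟨V, hV, hxV, subset_rfl⟩, ?_⟩
  simpa [measure_toMeasurable, hS] using hD _ (measurableSet_toMeasurable m S)

lemma eventually_mem_of_mem_basinSet {X : Type*} [MetricSpace X] {f : ℝ → X → X}
    {A U : Set X} (hA : IsCompact A) (hAne : A.Nonempty) (hU : IsOpen U) (hAU : A ⊆ U)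
    {x : X} (hx : x ∈ basinSet f A) : ∀ᶠ t in atTop, f t x ∈ U := by
  obtain ⟨δ, hδ, hδU⟩ := hA.exists_thickening_subset_open hU hAU
  filter_upwards [(show Tendsto _ _ _ from hx).eventually_lt_const hδ] with t ht
  exact hδU ((mem_thickening_iff_infDist_lt hAne).mpr ht)

theorem stmt_10_general {X : Type*} [MetricSpace X] [TopologicalSpace.SeparableSpace X]
    [MeasurableSpace X]
    (m : Measure X)
    (f : ℝ → X → X)
    (hfadd : ∀ s t : ℝ, 0 ≤ s → 0 ≤ t → f (s + t) = f s ∘ f t)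
    (hcont : ContinuousOn (fun p : ℝ × X => f p.1 p.2) (Set.Ici 0 ×ˢ Set.univ))
    (hcover : ∀ x : X, ∃ V : Set X, IsOpen V ∧ x ∈ V ∧
      ∀ t : ℝ, 0 ≤ t → ∃ D : ℝ≥0, ∀ S : Set X, MeasurableSet S →
        m (V ∩ f t ⁻¹' S) ≤ (D : ℝ≥0∞) * m S)
    (μ : Measure X) [IsProbabilityMeasure μ]
    (hne : (msupp μ).Nonempty) (hcomp : IsCompact (msupp μ))
    (hattr : ∃ V : Set X, IsOpen V ∧ msupp μ ⊆ V ∧ V ⊆ basinSet f (msupp μ)) :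
    PhysicalMeasure m f μ ↔ m (basinSet f (msupp μ) \ basinOf f μ) = 0 := by
  have : SecondCountableTopology X := UniformSpace.secondCountable_of_separable X
  constructor
  · rintro ⟨-, -, U, hU, hsuppU, hnull⟩
    refine measure_mono_null (t := ⋃ n : ℕ, f n ⁻¹' (U \ basinOf f μ)) ?_
      (measure_iUnion_null fun n => measure_preimage_null_of_locally_bounded_density
        (fun x => ?_) hnull)
    · rintro x ⟨hx, hxμ⟩
      obtain ⟨n, hn⟩ := (tendsto_natCast_atTop_atTop.eventually
        (eventually_mem_of_mem_basinSet hcomp hne hU hsuppU hx)).exists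
      exact mem_iUnion.mpr
        ⟨n, hn, fun h => hxμ (mem_basinOf_of_apply_mem hfadd hcont n.cast_nonneg h)⟩
    · obtain ⟨V, hV, hxV, hD⟩ := hcover x
      exact ⟨V, hV, hxV, hD n n.cast_nonneg⟩
  · intro h
    obtain ⟨V, hV, hsuppV, hVbasin⟩ := hattr
    exact ⟨‹_›, hcomp, V, hV, hsuppV, measure_mono_null (sdiff_subset_sdiff_left hVbasin) h⟩

/-- Under the standing setup, let `μ` be a Borel probability measure
whose support is an attractor. Then `μ` is physical if and only if `Basin(μ)` includes
`m`-almost all points of `Basin(supp μ)`. -/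
theorem stmt_10 {X : Type*} [MetricSpace X] [TopologicalSpace.SeparableSpace X]
    [MeasurableSpace X] [BorelSpace X]
    (m : Measure X) [IsLocallyFiniteMeasure m] [m.IsOpenPosMeasure]
    (f : ℝ → X → X)
    (hf0 : f 0 = id)
    (hfadd : ∀ s t : ℝ, 0 ≤ s → 0 ≤ t → f (s + t) = f s ∘ f t)
    (hcont : ContinuousOn (fun p : ℝ × X => f p.1 p.2) (Set.Ici 0 ×ˢ Set.univ))
    (hcover : ∀ x : X, ∃ V : Set X, IsOpen V ∧ x ∈ V ∧
      ∀ t : ℝ, 0 ≤ t → ∃ D : ℝ≥0, ∀ S : Set X, MeasurableSet S →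
        m (V ∩ f t ⁻¹' S) ≤ (D : ℝ≥0∞) * m S)
    (μ : Measure X) [IsProbabilityMeasure μ]
    (hne : (msupp μ).Nonempty) (hcomp : IsCompact (msupp μ))
    (hinv : ∀ t : ℝ, 0 ≤ t → f t '' (msupp μ) = msupp μ)
    (hattr : ∃ V : Set X, IsOpen V ∧ msupp μ ⊆ V ∧ V ⊆ basinSet f (msupp μ)) :
    PhysicalMeasure m f μ ↔ m (basinSet f (msupp μ) \ basinOf f μ) = 0 :=
  stmt_10_general m f hfadd hcont hcover μ hne hcomp hattr
end

section
/- Let X be a metric space and (f^t)_{t ≥ 0} a semiflow of maps f^t : X → X such that (t, x) ↦ f^t x is continuous. Let A ⊂ X be a nonempty compact invariant set. If A is an attractor via orbit-tracking, then A is stable via orbit-tracking and A is an attractor; moreover, any neighbourhood U of A that ε-orbit-tracks A for every ε > 0 is contained in Basin(A). -/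
open MeasureTheory Filter Topology Set Metric

/-- `U` ε-orbit-tracks `A`: there is `T ≥ 0` such that every `x ∈ U` has a `y ∈ A` with
`d(f^t x, f^t y) < ε` for all `t ≥ T`. -/
def OrbitTracks {X : Type*} [MetricSpace X] (f : ℝ → X → X) (U A : Set X) (ε : ℝ) : Prop :=
  ∃ T : ℝ, 0 ≤ T ∧ ∀ x ∈ U, ∃ y ∈ A, ∀ t : ℝ, T ≤ t → dist (f t x) (f t y) < ε

/-- Let `X` be a metric space, `(f^t)_{t ≥ 0}` a continuous semiflow,
and `A` a nonempty compact invariant set. If `A` is an attractor via orbit-tracking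
(some neighbourhood `U` of `A` ε-orbit-tracks `A` for every `ε > 0`), then `A` is stable
via orbit-tracking and `A` is an attractor; moreover, any neighbourhood `U` of `A` that
ε-orbit-tracks `A` for every `ε > 0` is contained in `Basin(A)`. -/
theorem stmt_12 {X : Type*} [MetricSpace X]
    (f : ℝ → X → X)
    (hf0 : f 0 = id)
    (hfadd : ∀ s t : ℝ, 0 ≤ s → 0 ≤ t → f (s + t) = f s ∘ f t)
    (hcont : ContinuousOn (fun p : ℝ × X => f p.1 p.2) (Set.Ici 0 ×ˢ Set.univ))
    (A : Set X) (hne : A.Nonempty) (hcomp : IsCompact A)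
    (hinv : ∀ t : ℝ, 0 ≤ t → f t '' A = A)
    (htrack : ∃ U : Set X, (∃ V : Set X, IsOpen V ∧ A ⊆ V ∧ V ⊆ U) ∧
      ∀ ε : ℝ, 0 < ε → OrbitTracks f U A ε) :
    (∀ ε : ℝ, 0 < ε → ∃ U : Set X, (∃ V : Set X, IsOpen V ∧ A ⊆ V ∧ V ⊆ U) ∧
        OrbitTracks f U A ε) ∧
      (∃ W : Set X, IsOpen W ∧ A ⊆ W ∧ W ⊆ basinSet f A) ∧
      ∀ U : Set X, (∃ V : Set X, IsOpen V ∧ A ⊆ V ∧ V ⊆ U) →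
        (∀ ε : ℝ, 0 < ε → OrbitTracks f U A ε) → U ⊆ basinSet f A := by
  obtain ⟨U, ⟨V, hVo, hAV, hVU⟩, hU⟩ := htrack
  have key : ∀ U' : Set X, (∀ ε : ℝ, 0 < ε → OrbitTracks f U' A ε) →
      U' ⊆ basinSet f A := by
    intro U' hU' x hx
    rw [basinSet, Set.mem_setOf_eq, Metric.tendsto_nhds]
    intro ε hε
    obtain ⟨T, hT0, hT⟩ := hU' ε hε
    obtain ⟨y, hy, hdy⟩ := hT x hx
    filter_upwards [eventually_ge_atTop T] with t ht
    have ht0 : 0 ≤ t := le_trans hT0 ht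
    have hfy : f t y ∈ A := by
      rw [← hinv t ht0]; exact Set.mem_image_of_mem _ hy
    have h1 : infDist (f t x) A ≤ dist (f t x) (f t y) := infDist_le_dist_of_mem hfy
    have h2 : (0:ℝ) ≤ infDist (f t x) A := infDist_nonneg
    rw [Real.dist_eq, sub_zero, abs_of_nonneg h2]
    exact lt_of_le_of_lt h1 (hdy t ht)
  exact ⟨fun ε hε => ⟨U, ⟨V, hVo, hAV, hVU⟩, hU ε hε⟩,
    ⟨V, hVo, hAV, fun x hx => key U hU (hVU hx)⟩, fun U' h1 h2 => key U' h2⟩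
end

section
/- Let X be a locally compact metric space and (f^t)_{t ≥ 0} a semiflow of maps f^t : X → X such that (t, x) ↦ f^t x is continuous. Let A ⊂ X be a nonempty compact invariant set which is stable via orbit-tracking and is an attractor. Then A is an attractor via orbit-tracking; indeed, any compact neighbourhood of A contained in Basin(A) ε-orbit-tracks A for every ε > 0. -/
open MeasureTheory Filter Topology Set Metric

/-- Let `X` be a locally compact metric space, `(f^t)_{t ≥ 0}` a
continuous semiflow, and `A` a nonempty compact invariant set which is stable via
orbit-tracking and is an attractor. Then `A` is an attractor via orbit-tracking;
indeed, any compact neighbourhood of `A` contained in `Basin(A)` ε-orbit-tracks `A`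
for every `ε > 0`. -/
theorem stmt_13 {X : Type*} [MetricSpace X] [LocallyCompactSpace X]
    (f : ℝ → X → X)
    (hf0 : f 0 = id)
    (hfadd : ∀ s t : ℝ, 0 ≤ s → 0 ≤ t → f (s + t) = f s ∘ f t)
    (hcont : ContinuousOn (fun p : ℝ × X => f p.1 p.2) (Set.Ici 0 ×ˢ Set.univ))
    (A : Set X) (hne : A.Nonempty) (hcomp : IsCompact A)
    (hinv : ∀ t : ℝ, 0 ≤ t → f t '' A = A)
    (hstable : ∀ ε : ℝ, 0 < ε → ∃ U : Set X,
      (∃ V : Set X, IsOpen V ∧ A ⊆ V ∧ V ⊆ U) ∧ OrbitTracks f U A ε)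
    (hattr : ∃ W : Set X, IsOpen W ∧ A ⊆ W ∧ W ⊆ basinSet f A) :
    (∃ U : Set X, (∃ V : Set X, IsOpen V ∧ A ⊆ V ∧ V ⊆ U) ∧
        ∀ ε : ℝ, 0 < ε → OrbitTracks f U A ε) ∧
      ∀ U : Set X, IsCompact U → (∃ V : Set X, IsOpen V ∧ A ⊆ V ∧ V ⊆ U) →
        U ⊆ basinSet f A → ∀ ε : ℝ, 0 < ε → OrbitTracks f U A ε := by
  -- continuity of `f t` for positive `t`
  have hcontt : ∀ t : ℝ, 0 < t → Continuous (f t) := by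
    intro t ht
    rw [continuous_iff_continuousAt]
    intro x
    have h1 : ContinuousAt (fun p : ℝ × X => f p.1 p.2) (t, x) :=
      hcont.continuousAt (prod_mem_nhds (Ici_mem_nhds ht) univ_mem)
    exact h1.comp ((continuous_const.prodMk continuous_id).continuousAt)
  have main : ∀ U : Set X, IsCompact U → (∃ V : Set X, IsOpen V ∧ A ⊆ V ∧ V ⊆ U) →
      U ⊆ basinSet f A → ∀ ε : ℝ, 0 < ε → OrbitTracks f U A ε := by
    intro U hU _ hUb ε hε
    obtain ⟨S, ⟨W₀, hW₀open, hAW₀, hW₀S⟩, T₀, hT₀, htrack⟩ := hstable ε hε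
    obtain ⟨δ, hδ, hthick⟩ := hcomp.exists_thickening_subset_open hW₀open hAW₀
    -- for each x pick a time `t x ≥ 1` at which the orbit of `x` is inside `W₀`
    have key : ∀ x : X, ∃ tx : ℝ, 1 ≤ tx ∧ (x ∈ U → f tx x ∈ W₀) := by
      intro x
      by_cases hx : x ∈ U
      · have hb : Tendsto (fun t : ℝ => infDist (f t x) A) atTop (𝓝 0) := hUb hx
        have hev : ∀ᶠ t : ℝ in atTop, infDist (f t x) A < δ :=
          hb.eventually (gt_mem_nhds hδ)
        obtain ⟨a, ha⟩ := eventually_atTop.mp hev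
        refine ⟨max a 1, le_max_right _ _, fun _ => ?_⟩
        have : infDist (f (max a 1) x) A < δ := ha _ (le_max_left _ _)
        exact hthick ((mem_thickening_iff_infDist_lt hne).2 this)
      · exact ⟨1, le_refl 1, fun h => absurd h hx⟩
    choose t ht1 htW using key
    -- cover U by the open sets `f (t x) ⁻¹' W₀`
    have hNopen : ∀ x : X, IsOpen (f (t x) ⁻¹' W₀) := fun x =>
      hW₀open.preimage (hcontt (t x) (lt_of_lt_of_le one_pos (ht1 x)))
    obtain ⟨s, hsU, hcover⟩ := hU.elim_nhds_subcover (fun x => f (t x) ⁻¹' W₀)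
      (fun x hx => (hNopen x).mem_nhds (htW x hx))
    obtain ⟨M, hM⟩ := (s.image t).exists_le
    refine ⟨T₀ + max M 1, by positivity, ?_⟩
    intro x hx
    obtain ⟨x₀, hx₀s, hxN⟩ := mem_iUnion₂.mp (hcover hx)
    set t₀ := t x₀ with ht₀def
    have ht₀1 : (1 : ℝ) ≤ t₀ := ht1 x₀
    have ht₀0 : (0 : ℝ) ≤ t₀ := by linarith
    have ht₀M : t₀ ≤ max M 1 :=
      le_trans (hM _ (Finset.mem_image_of_mem t hx₀s)) (le_max_left _ _)
    -- track f t₀ x from S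
    obtain ⟨y, hyA, hy⟩ := htrack (f t₀ x) (hW₀S hxN)
    -- pull y back by invariance
    have hyA' : y ∈ f t₀ '' A := by rw [hinv t₀ ht₀0]; exact hyA
    obtain ⟨y', hy'A, hy'eq⟩ := hyA'
    refine ⟨y', hy'A, ?_⟩
    intro u hu
    have hτ0 : 0 ≤ u - t₀ := by
      have : T₀ + t₀ ≤ u := le_trans (by linarith) hu
      linarith
    have hτT : T₀ ≤ u - t₀ := by
      have : T₀ + t₀ ≤ u := le_trans (by linarith) hu
      linarith
    have hsplit : f u = f (u - t₀) ∘ f t₀ := by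
      have := hfadd (u - t₀) t₀ hτ0 ht₀0
      rwa [sub_add_cancel] at this
    rw [hsplit]
    simp only [Function.comp_apply, hy'eq]
    exact hy (u - t₀) hτT
  refine ⟨?_, main⟩
  obtain ⟨W, hWopen, hAW, hWb⟩ := hattr
  obtain ⟨K, hK, hAint, hKW⟩ := exists_compact_between hcomp hWopen hAW
  exact ⟨K, ⟨interior K, isOpen_interior, hAint, interior_subset⟩,
    fun ε hε => main K hK ⟨interior K, isOpen_interior, hAint, interior_subset⟩
      (hKW.trans hWb) ε hε⟩
end

section
/- Let X be a measurable space with a measure μ and a probability measure ν. Let 𝒮 be a finite index set, 𝓜 = (M_i)_{i ∈ 𝒮} a family of measurable sets with 0 < μ(M_i) < ∞, and 𝓝 = (N_i)_{i ∈ 𝒮} a family of pairwise disjoint measurable sets with Σ_{i ∈ 𝒮} ν(N_i) = 1. Let P = Σ_{i ∈ 𝒮} ν(N_i) · μ(·|M_i), where μ(B|M_i) = μ(B ∩ M_i)/μ(M_i). Fix ε > 0 and a bounded measurable function g : X → ℝ, and suppose that for each i ∈ 𝒮 there exists x_i ∈ M_i such that |g(y) − g(x_i)| < ε/2 for all y ∈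 M_i ∪ N_i. Then |∫ g dν − ∫ g dP| < ε. -/
open MeasureTheory Filter Topology Set
open scoped ENNReal ProbabilityTheory

/-!
Split `∫ g ∂ν` along the partition `(N i)`, whose complement is `ν`-null because
`∑ i, ν (N i) = 1`, and compare each piece with `ν (N i) * g (x i)`. The oscillation bound gives
`|∫_{N i} g ∂ν - ν (N i) * g (x i)| ≤ ν (N i) * ε / 2` and, since `μ[|M i]` is a probability
measure concentrated on `M i`, the strict bound `|∫ g ∂μ[|M i] - g (x i)| < ε / 2`. Averaging
numbers `< ε` against weights `ν (N i)` summing to `1` stays `< ε`.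
-/

section

variable {α : Type*} [MeasurableSpace α] {μ : Measure α}

theorem integral_pos_of_ae_pos [NeZero μ] {f : α → ℝ} (hfi : Integrable f μ)
    (hf : ∀ᵐ x ∂μ, 0 < f x) : 0 < ∫ x, f x ∂μ := by
  have hf₀ : 0 ≤ᵐ[μ] f := hf.mono fun _ hx => hx.le
  refine (integral_nonneg_of_ae hf₀).lt_of_ne fun h => NeZero.ne μ ?_
  have hzero : f =ᵐ[μ] 0 := (integral_eq_zero_iff_of_nonneg_ae hf₀ hfi).1 h.symm
  rw [← ae_eq_bot, ← eventually_false_iff_eq_bot]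
  filter_upwards [hf, hzero] with x hpos hx
  simp [hx] at hpos

theorem integral_finsetSum_smul_measure {ι E : Type*} [NormedAddCommGroup E] [NormedSpace ℝ E]
    {s : Finset ι} {m : ι → Measure α} {c : ι → ℝ≥0∞} {f : α → E}
    (hc : ∀ i ∈ s, c i ≠ ∞) (hf : ∀ i ∈ s, Integrable f (m i)) :
    ∫ x, f x ∂(∑ i ∈ s, c i • m i) = ∑ i ∈ s, (c i).toReal • ∫ x, f x ∂(m i) := by
  rw [integral_finsetSum_measure fun i hi => (hf i hi).smul_measure (hc i hi)]
  exact Finset.sum_congr rfl fun i _ => integral_smul_measure f (c i)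

open Function in
theorem integral_eq_sum_setIntegral_of_sum_measure_eq_one [IsProbabilityMeasure μ]
    {ι : Type*} [Fintype ι] {s : ι → Set α} {f : α → ℝ} (hs : ∀ i, MeasurableSet (s i))
    (hd : Pairwise (Disjoint on s)) (hsum : ∑ i, μ (s i) = 1)
    (hf : ∀ i, IntegrableOn f (s i) μ) :
    ∫ x, f x ∂μ = ∑ i, ∫ x in s i, f x ∂μ := by
  have hcover : μ (⋃ i, s i)ᶜ = 0 := by
    rw [prob_compl_eq_zero_iff (.iUnion hs), measure_iUnion hd hs, tsum_fintype, hsum]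
  rw [← integral_iUnion_fintype hs hd hf, setIntegral_congr_set (ae_eq_univ.2 hcover),
    setIntegral_univ]

variable [IsFiniteMeasure μ] {f : α → ℝ} {c r : ℝ}

theorem integrable_of_ae_abs_sub_le (hf : AEStronglyMeasurable f μ)
    (h : ∀ᵐ x ∂μ, |f x - c| ≤ r) : Integrable f μ :=
  .of_bound hf (|c| + r) <| h.mono fun x hx => by
    rw [Real.norm_eq_abs]
    linarith [abs_sub_abs_le_abs_sub (f x) c]

theorem integral_sub_const_eq (hf : Integrable f μ) (c : ℝ) :
    ∫ x, (f x - c) ∂μ = ∫ x, f x ∂μ - μ.real univ * c := by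
  rw [integral_sub hf (integrable_const c), integral_const, smul_eq_mul]

theorem abs_integral_sub_le_of_ae_abs_sub_le (hf : AEStronglyMeasurable f μ)
    (h : ∀ᵐ x ∂μ, |f x - c| ≤ r) : |∫ x, f x ∂μ - μ.real univ * c| ≤ μ.real univ * r := by
  rw [← integral_sub_const_eq (integrable_of_ae_abs_sub_le hf h), mul_comm]
  exact norm_integral_le_of_norm_le_const (f := fun x => f x - c) h

theorem abs_integral_sub_lt_of_ae_abs_sub_lt [NeZero μ] (hf : AEStronglyMeasurable f μ)
    (h : ∀ᵐ x ∂μ, |f x - c| < r) : |∫ x, f x ∂μ - μ.real univ * c| < μ.real univ * r := by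
  have hfi := integrable_of_ae_abs_sub_le hf (h.mono fun _ hx => hx.le)
  have hdev : Integrable (fun x => |f x - c|) μ := (hfi.sub (integrable_const c)).abs
  calc |∫ x, f x ∂μ - μ.real univ * c| = |∫ x, (f x - c) ∂μ| := by
        rw [integral_sub_const_eq hfi]
    _ ≤ ∫ x, |f x - c| ∂μ := abs_integral_le_integral_abs
    _ < ∫ _, r ∂μ := by
        have := integral_pos_of_ae_pos (f := fun x => r - |f x - c|)
          ((integrable_const r).sub hdev) (h.mono fun _ hx => sub_pos.2 hx)
        rwa [integral_sub (integrable_const r) hdev, sub_pos] at this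
    _ = μ.real univ * r := by rw [integral_const, smul_eq_mul]

end

theorem Finset.sum_mul_lt_of_forall_lt {ι : Type*} [Fintype ι] {w a : ι → ℝ} {b : ℝ}
    (hw : ∀ i, 0 ≤ w i) (hw₁ : ∑ i, w i = 1) (ha : ∀ i, a i < b) : ∑ i, w i * a i < b := by
  obtain ⟨i, -, hi⟩ := Finset.exists_lt_of_sum_lt (s := Finset.univ) (f := 0) (g := w)
    (by simp [hw₁])
  calc ∑ i, w i * a i < ∑ i, w i * b :=
        Finset.sum_lt_sum (fun j _ => mul_le_mul_of_nonneg_left (ha j).le (hw j))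
          ⟨i, Finset.mem_univ _, mul_lt_mul_of_pos_left (ha i) hi⟩
    _ = b := by rw [← Finset.sum_mul, hw₁, one_mul]

theorem abs_sub_mul_le_mul_add {a b c w e : ℝ} (hw : 0 ≤ w) (h : |a - w * c| ≤ w * e) :
    |a - w * b| ≤ w * (e + |b - c|) :=
  calc |a - w * b| = |(a - w * c) - w * (b - c)| := by ring_nf
    _ ≤ |a - w * c| + |w * (b - c)| := abs_sub _ _
    _ ≤ w * (e + |b - c|) := by rw [abs_mul, abs_of_nonneg hw, mul_add]; gcongr

theorem stmt_15_general {X : Type*} [MeasurableSpace X]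
    (μ : Measure X) (ν : Measure X) [IsProbabilityMeasure ν]
    {ι : Type*} [Fintype ι]
    (M N : ι → Set X)
    (hMmeas : ∀ i, MeasurableSet (M i))
    (hMpos : ∀ i, 0 < μ (M i)) (hMfin : ∀ i, μ (M i) < ⊤)
    (hNmeas : ∀ i, MeasurableSet (N i))
    (hNdisj : ∀ i j, i ≠ j → Disjoint (N i) (N j))
    (hNsum : ∑ i, ν (N i) = 1)
    (ε : ℝ)
    (g : X → ℝ) (hg : Measurable g)
    (hosc : ∀ i, ∃ x ∈ M i, ∀ y ∈ M i ∪ N i, |g y - g x| < ε / 2) :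
    |(∫ x, g x ∂ν) -
        ∫ x, g x ∂(∑ i, (ν (N i)) • ProbabilityTheory.cond μ (M i))| < ε := by
  choose x _ hx using hosc
  have _ (i) : IsProbabilityMeasure μ[|M i] :=
    ProbabilityTheory.cond_isProbabilityMeasure_of_finite (hMpos i).ne' (hMfin i).ne
  have hoscN (i) : ∀ᵐ y ∂ν.restrict (N i), |g y - g (x i)| ≤ ε / 2 :=
    ae_restrict_of_forall_mem (hNmeas i) fun y hy => (hx i y (.inr hy)).le
  have hoscM (i) : ∀ᵐ y ∂μ[|M i], |g y - g (x i)| < ε / 2 :=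
    (ProbabilityTheory.ae_cond_mem (hMmeas i)).mono fun y hy => hx i y (.inl hy)
  have hν : ∫ y, g y ∂ν = ∑ i, ∫ y in N i, g y ∂ν :=
    integral_eq_sum_setIntegral_of_sum_measure_eq_one hNmeas (fun i j => hNdisj i j) hNsum
      fun i => integrable_of_ae_abs_sub_le hg.aestronglyMeasurable (hoscN i)
  have hP : ∫ y, g y ∂(∑ i, ν (N i) • μ[|M i]) = ∑ i, ν.real (N i) * ∫ y, g y ∂μ[|M i] :=
    integral_finsetSum_smul_measure (fun i _ => measure_ne_top ν _) fun i _ =>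
      integrable_of_ae_abs_sub_le hg.aestronglyMeasurable ((hoscM i).mono fun _ hy => hy.le)
  have hNbound (i) : |∫ y in N i, g y ∂ν - ν.real (N i) * g (x i)| ≤ ν.real (N i) * (ε / 2) := by
    simpa only [measureReal_restrict_apply_univ] using
      abs_integral_sub_le_of_ae_abs_sub_le hg.aestronglyMeasurable (hoscN i)
  have hMbound (i) : |∫ y, g y ∂μ[|M i] - g (x i)| < ε / 2 := by
    simpa using abs_integral_sub_lt_of_ae_abs_sub_lt hg.aestronglyMeasurable (hoscM i)
  have hw₁ : ∑ i, ν.real (N i) = 1 := by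
    simp [measureReal_def, ← ENNReal.toReal_sum fun i _ => measure_ne_top ν (N i), hNsum]
  rw [hν, hP, ← Finset.sum_sub_distrib]
  calc _ ≤ ∑ i, |∫ y in N i, g y ∂ν - ν.real (N i) * ∫ y, g y ∂μ[|M i]| :=
        Finset.abs_sum_le_sum_abs _ _
    _ ≤ ∑ i, ν.real (N i) * (ε / 2 + |∫ y, g y ∂μ[|M i] - g (x i)|) :=
        Finset.sum_le_sum fun i _ => abs_sub_mul_le_mul_add measureReal_nonneg (hNbound i)
    _ < ε := Finset.sum_mul_lt_of_forall_lt (fun _ => measureReal_nonneg) hw₁ fun i => by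
        linarith [hMbound i]

/-- Let `X` be a measurable space with a measure `μ` and a probability
measure `ν`. Let `𝒮` be a finite index set, `(M i)` measurable sets with
`0 < μ (M i) < ∞`, `(N i)` pairwise disjoint measurable sets with `Σ_i ν (N i) = 1`, and
`P = Σ_i ν (N i) • μ(·|M i)`. If `g` is a bounded measurable function such that for each
`i` there is `x_i ∈ M i` with `|g y − g x_i| < ε/2` for all `y ∈ M i ∪ N i`, then
`|∫ g dν − ∫ g dP| < ε`. -/
theorem stmt_15 {X : Type*} [MeasurableSpace X]
    (μ : Measure X) (ν : Measure X) [IsProbabilityMeasure ν]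
    {ι : Type*} [Fintype ι]
    (M N : ι → Set X)
    (hMmeas : ∀ i, MeasurableSet (M i))
    (hMpos : ∀ i, 0 < μ (M i)) (hMfin : ∀ i, μ (M i) < ⊤)
    (hNmeas : ∀ i, MeasurableSet (N i))
    (hNdisj : ∀ i j, i ≠ j → Disjoint (N i) (N j))
    (hNsum : ∑ i, ν (N i) = 1)
    (ε : ℝ) (hε : 0 < ε)
    (g : X → ℝ) (hg : Measurable g) (Mg : ℝ) (hgb : ∀ x, |g x| ≤ Mg)
    (hosc : ∀ i, ∃ x ∈ M i, ∀ y ∈ M i ∪ N i, |g y - g x| < ε / 2) :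
    |(∫ x, g x ∂ν) -
        ∫ x, g x ∂(∑ i, (ν (N i)) • ProbabilityTheory.cond μ (M i))| < ε :=
  stmt_15_general μ ν M N hMmeas hMpos hMfin hNmeas hNdisj hNsum ε g hg hosc
end

section
/- Let X be a metric space, μ a Borel measure on X, and (h_n) a sequence of measurable functions h_n : X → [0, ∞] dominated by a single μ-integrable function H : X → [0, ∞] (i.e. h_n ≤ H for all n). Suppose the sequence of measures μ_n : S ↦ ∫_S h_n dμ converges weakly to a finite Borel measure μ_∞. Then μ_∞ is absolutely continuous with respect to μ. -/
open MeasureTheory Filter Topology Set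
open scoped ENNReal

/-!
Write `ν = H • μ`. Every `μₙ = hₙ • μ` lies below the finite measure `ν`, and weak limits
cannot gain mass on open sets: `μ_∞(U) ≤ ν(U)` for `U` open. Since a finite measure on a
metric space is outer regular, this gives `μ_∞ ≤ ν ≪ μ`.
-/

namespace MeasureTheory.FiniteMeasure

variable {Ω ι : Type*} [MeasurableSpace Ω] [TopologicalSpace Ω] [HasOuterApproxClosed Ω]
  [OpensMeasurableSpace Ω] {L : Filter ι} [L.NeBot] {μ : FiniteMeasure Ω}
  {μs : ι → FiniteMeasure Ω} {ν : Measure Ω}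

theorem measure_open_le_of_tendsto_of_forall_le (hμs : Tendsto μs L (𝓝 μ))
    (hle : ∀ i, (μs i : Measure Ω) ≤ ν) {U : Set Ω} (hU : IsOpen U) :
    (μ : Measure Ω) U ≤ ν U := by
  have hmass : Tendsto (fun i ↦ (μs i : Measure Ω) univ) L (𝓝 ((μ : Measure Ω) univ)) := by
    simpa only [← ennreal_mass] using ENNReal.tendsto_coe.mpr hμs.mass
  have hsplit : ∀ i, (μs i : Measure Ω) univ ≤ (μs i : Measure Ω) Uᶜ + ν U := fun i ↦
    calc (μs i : Measure Ω) univ ≤ (μs i : Measure Ω) Uᶜ + (μs i : Measure Ω) U := by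
          simpa only [compl_union_self] using measure_union_le (μ := (μs i : Measure Ω)) Uᶜ U
      _ ≤ (μs i : Measure Ω) Uᶜ + ν U := add_le_add_right (hle i U) _
  have huniv : (μ : Measure Ω) univ ≤ (μ : Measure Ω) Uᶜ + ν U :=
    calc (μ : Measure Ω) univ = L.limsup fun i ↦ (μs i : Measure Ω) univ := hmass.limsup_eq.symm
      _ ≤ L.limsup fun i ↦ (μs i : Measure Ω) Uᶜ + ν U :=
          limsup_le_limsup (Eventually.of_forall hsplit)
      _ = (L.limsup fun i ↦ (μs i : Measure Ω) Uᶜ) + ν U := limsup_add_const _ _ _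
          ⟨⊤, Eventually.of_forall fun _ ↦ le_top⟩ ⟨⊥, fun _ _ ↦ bot_le⟩
      _ ≤ (μ : Measure Ω) Uᶜ + ν U :=
          add_le_add_left (limsup_measure_closed_le_of_tendsto hμs hU.isClosed_compl) _
  have hcompl := measure_compl hU.measurableSet.compl (measure_ne_top (μ : Measure Ω) Uᶜ)
  rw [compl_compl] at hcompl
  exact hcompl ▸ tsub_le_iff_left.mpr huniv

theorem le_of_tendsto_of_forall_le [ν.OuterRegular] (hμs : Tendsto μs L (𝓝 μ))
    (hle : ∀ i, (μs i : Measure Ω) ≤ ν) : (μ : Measure Ω) ≤ ν :=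
  Measure.le_iff'.mpr fun s ↦ by
    rw [s.measure_eq_iInf_isOpen ν]
    exact le_iInf₂ fun U hsU ↦ le_iInf fun hU ↦
      (measure_mono hsU).trans (measure_open_le_of_tendsto_of_forall_le hμs hle hU)

end MeasureTheory.FiniteMeasure

theorem stmt_16_general {X : Type*} [MetricSpace X] [MeasurableSpace X] [BorelSpace X]
    (μ : Measure X)
    (h : ℕ → X → ℝ≥0∞)
    (H : X → ℝ≥0∞) (hHint : ∫⁻ x, H x ∂μ < ⊤)
    (hdom : ∀ n, h n ≤ H)
    (μlim : Measure X) [IsFiniteMeasure μlim]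
    (hweak : ∀ g : BoundedContinuousFunction X ℝ,
      Tendsto (fun n : ℕ => ∫ x, g x ∂(μ.withDensity (h n))) atTop
        (𝓝 (∫ x, g x ∂μlim))) :
    μlim ≪ μ := by
  have : IsFiniteMeasure (μ.withDensity H) := isFiniteMeasure_withDensity hHint.ne
  have hle : ∀ n, μ.withDensity (h n) ≤ μ.withDensity H :=
    fun n ↦ withDensity_mono (ae_of_all μ (hdom n))
  let μs : ℕ → FiniteMeasure X := fun n ↦ ⟨μ.withDensity (h n), isFiniteMeasure_of_le _ (hle n)⟩
  have hμs : Tendsto μs atTop (𝓝 ⟨μlim, inferInstance⟩) :=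
    FiniteMeasure.tendsto_iff_forall_integral_tendsto.mpr hweak
  exact (Measure.absolutelyContinuous_of_le
    (FiniteMeasure.le_of_tendsto_of_forall_le hμs hle)).trans
    (withDensity_absolutelyContinuous μ H)

/-- Let `X` be a metric space, `μ` a Borel measure on `X`, and `(h_n)`
a sequence of measurable functions `h_n : X → [0, ∞]` dominated by a single
`μ`-integrable function `H`. If the measures `μ_n : S ↦ ∫_S h_n dμ` converge weakly to
a finite Borel measure `μ_∞`, then `μ_∞` is absolutely continuous w.r.t. `μ`. -/
theorem stmt_16 {X : Type*} [MetricSpace X] [MeasurableSpace X] [BorelSpace X]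
    (μ : Measure X)
    (h : ℕ → X → ℝ≥0∞) (hmeas : ∀ n, Measurable (h n))
    (H : X → ℝ≥0∞) (hHmeas : Measurable H) (hHint : ∫⁻ x, H x ∂μ < ⊤)
    (hdom : ∀ n, h n ≤ H)
    (μlim : Measure X) [IsFiniteMeasure μlim]
    (hweak : ∀ g : BoundedContinuousFunction X ℝ,
      Tendsto (fun n : ℕ => ∫ x, g x ∂(μ.withDensity (h n))) atTop
        (𝓝 (∫ x, g x ∂μlim))) :
    μlim ≪ μ :=
  stmt_16_general μ h H hHint hdom μlim hweak
end

section
/- Define 𝓕 : (1, ∞) → (0, ∞) by 𝓕(t) = 1/(t log t). Then 𝓕 is a strictly decreasing C^∞ bijection onto (0, ∞) with inverse 𝓕⁻¹ : (0, ∞) → (1, ∞), and the function b₂ : ℝ → ℝ defined by b₂(0) = 0 and b₂(y) = sgn(y)·𝓕′(𝓕⁻¹(|y|)) for y ≠ 0 is continuously differentiable on all of ℝ, with b₂′(0) = 0. -/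
/-!
On `(0, ∞)` write `f := 𝓕′ ∘ 𝓕⁻¹`, so that `b₂ y = sgn y · f |y|` is the odd extension of `f`.
By the inverse function rule `f′(s) = 𝓕″(u) / 𝓕′(u)` with `u = 𝓕⁻¹ s`, and `u → ∞` as `s → 0⁺`.
Both `𝓕′(u) = -(log u + 1) / (u log u)²` and
`𝓕″(u) / 𝓕′(u) = 1 / (u (log u + 1)) - 2 / u - 2 / (u log u)` tend to `0` as `u → ∞`.
The odd extension of a `C¹` function on `(0, ∞)` whose value and derivative both tend to `0`
at `0⁺` is `C¹` on `ℝ`: its derivative extends continuously by `0` at the origin, and a function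
continuous at a point whose derivative has a limit there is differentiable there.
-/

open Set Real Filter Topology

theorem Set.RightInvOn.strictAntiOn {α β : Type*} [LinearOrder α] [Preorder β] {f : α → β}
    {g : β → α} {s : Set α} {t : Set β} (hgf : RightInvOn g f t) (hf : StrictAntiOn f s)
    (hg : MapsTo g t s) : StrictAntiOn g t := by
  intro a ha b hb hab
  by_contra! h
  have hba := hf.antitoneOn (hg ha) (hg hb) h
  rw [hgf ha, hgf hb] at hba
  exact hab.not_ge hba

theorem StrictAntiOn.continuousAt_of_image_mem_nhds {α β : Type*} [LinearOrder α]
    [TopologicalSpace α] [OrderTopology α] [LinearOrder β] [TopologicalSpace β] [OrderTopology β]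
    [DenselyOrdered β] {f : α → β} {s : Set α} {a : α} (h_anti : StrictAntiOn f s)
    (hs : s ∈ 𝓝 a) (hfs : f '' s ∈ 𝓝 (f a)) : ContinuousAt f a :=
  StrictMonoOn.continuousAt_of_image_mem_nhds (β := βᵒᵈ) h_anti hs hfs

theorem AntitoneOn.tendsto_nhdsGT_atTop {f : ℝ → ℝ} {a : ℝ} (h_anti : AntitoneOn f (Ioi a))
    (hf : ¬BddAbove (f '' Ioi a)) : Tendsto f (𝓝[>] a) atTop := by
  rw [tendsto_atTop]
  intro M
  obtain ⟨_, ⟨b, hb, rfl⟩, hMb⟩ := not_bddAbove_iff.mp hf M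
  filter_upwards [Ioo_mem_nhdsGT hb] with x hx
  exact hMb.le.trans (h_anti hx.1 hb hx.2.le)

theorem hasDerivAt_of_eq_sign_mul_abs {f f' b : ℝ → ℝ} (hf : ∀ s > 0, HasDerivAt f (f' s) s)
    (hb : ∀ y ≠ 0, b y = sign y * f |y|) {y : ℝ} (hy : y ≠ 0) : HasDerivAt b (f' |y|) y := by
  rcases hy.lt_or_gt with hy | hy
  · have h := ((hf (-y) (neg_pos.mpr hy)).comp y (hasDerivAt_neg y)).fun_neg
    rw [abs_of_neg hy]
    refine (h.congr_deriv (by simp)).congr_of_eventuallyEq ?_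
    filter_upwards [Iio_mem_nhds hy] with z (hz : z < 0)
    simp [hb z hz.ne, sign_of_neg hz, abs_of_neg hz]
  · rw [abs_of_pos hy]
    refine (hf y hy).congr_of_eventuallyEq ?_
    filter_upwards [Ioi_mem_nhds hy] with z (hz : 0 < z)
    simp [hb z hz.ne', sign_of_pos hz, abs_of_pos hz]

theorem contDiff_one_of_eq_sign_mul_abs {f f' b : ℝ → ℝ} (hf : ∀ s > 0, HasDerivAt f (f' s) s)
    (hf' : ContinuousOn f' (Ioi 0)) (hf0 : Tendsto f (𝓝[>] 0) (𝓝 0))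
    (hf'0 : Tendsto f' (𝓝[>] 0) (𝓝 0)) (hb0 : b 0 = 0) (hb : ∀ y ≠ 0, b y = sign y * f |y|) :
    ContDiff ℝ 1 b ∧ HasDerivAt b 0 0 := by
  set g : ℝ → ℝ := fun y => if y = 0 then 0 else f' |y| with hg_def
  have hg_eq : EqOn g (f' ∘ abs) {0}ᶜ := fun y hy => if_neg hy
  have hderiv : ∀ y ≠ 0, HasDerivAt b (g y) y := fun y hy => by
    simpa [hg_def, hy] using hasDerivAt_of_eq_sign_mul_abs hf hb hy
  have hb_cont : ContinuousAt b 0 := by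
    rw [← continuousWithinAt_compl_self, ContinuousWithinAt, hb0]
    refine squeeze_zero_norm' ?_ (by simpa using (hf0.comp tendsto_abs_nhdsNE_zero).norm)
    filter_upwards [self_mem_nhdsWithin] with y (hy : y ≠ 0)
    rcases sign_apply_eq_of_ne_zero y hy with h | h <;> simp [hb y hy, h]
  have hg_cont : Continuous g := by
    refine continuous_iff_continuousAt.mpr fun y => ?_
    rcases eq_or_ne y 0 with rfl | hy
    · rw [← continuousWithinAt_compl_self, ContinuousWithinAt, show g 0 = 0 from if_pos rfl]
      exact (hf'0.comp tendsto_abs_nhdsNE_zero).congr' (eventuallyEq_nhdsWithin_of_eqOn hg_eq).symm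
    · refine ContinuousAt.congr ?_
        (hg_eq.eventuallyEq_of_mem (isOpen_compl_singleton.mem_nhds hy)).symm
      exact (hf'.continuousAt (Ioi_mem_nhds (abs_pos.mpr hy))).comp continuous_abs.continuousAt
  have hderiv_all := hasDerivAt_of_hasDerivAt_of_ne' hderiv hb_cont hg_cont.continuousAt
  refine ⟨contDiff_one_iff_deriv.mpr ⟨fun y => (hderiv_all y).differentiableAt, ?_⟩, ?_⟩
  · rwa [show deriv b = g from funext fun y => (hderiv_all y).deriv]
  · simpa [hg_def] using hderiv_all 0

noncomputable def invMulLog (t : ℝ) : ℝ := 1 / (t * log t)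

noncomputable def invMulLogDeriv (t : ℝ) : ℝ := -(log t + 1) / (t * log t) ^ 2

-- `𝓕″ / 𝓕′`, the logarithmic derivative of `𝓕′`.
noncomputable def invMulLogDerivLogDeriv (t : ℝ) : ℝ :=
  (t * (log t + 1))⁻¹ - 2 * t⁻¹ - 2 * (t * log t)⁻¹

lemma strictAntiOn_invMulLog : StrictAntiOn invMulLog (Ioi 1) := by
  intro a ha b _ hab
  exact one_div_lt_one_div_of_lt (mul_log_pos ha) (mul_lt_mul'' hab
    (log_lt_log (one_pos.trans ha) hab) (by linarith [mem_Ioi.mp ha]) (log_nonneg (le_of_lt ha)))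

lemma contDiffOn_invMulLog {n : WithTop ℕ∞} : ContDiffOn ℝ n invMulLog (Ioi 1) :=
  contDiffOn_const.div (contDiffOn_id.mul (contDiffOn_log.mono fun _ ht => (one_pos.trans ht).ne'))
    fun _ ht => (mul_log_pos ht).ne'

lemma mapsTo_invMulLog : MapsTo invMulLog (Ioi 1) (Ioi 0) :=
  fun _ ht => one_div_pos.mpr (mul_log_pos ht)

lemma tendsto_mul_log_atTop : Tendsto (fun t : ℝ => t * log t) atTop atTop :=
  tendsto_id.atTop_mul_atTop₀ tendsto_log_atTop

lemma surjOn_invMulLog : SurjOn invMulLog (Ioi 1) (Ioi 0) := by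
  intro c (hc : 0 < c)
  obtain ⟨b, hb, hb1⟩ :=
    ((tendsto_mul_log_atTop.eventually_gt_atTop c⁻¹).and (eventually_ge_atTop 1)).exists
  have hcont : ContinuousOn (fun t : ℝ => t * log t) (Icc 1 b) :=
    continuous_mul_log.continuousOn
  obtain ⟨t, ht, htc⟩ := intermediate_value_Ioo hb1 hcont ⟨by simpa using hc, hb⟩
  exact ⟨t, ht.1, by simp [invMulLog, htc]⟩

lemma bijOn_invMulLog : BijOn invMulLog (Ioi 1) (Ioi 0) :=
  ⟨mapsTo_invMulLog, strictAntiOn_invMulLog.injOn, surjOn_invMulLog⟩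

lemma hasDerivAt_invMulLog {t : ℝ} (ht : 1 < t) : HasDerivAt invMulLog (invMulLogDeriv t) t := by
  have h := (hasDerivAt_mul_log (one_pos.trans ht).ne').fun_inv (mul_log_pos ht).ne'
  unfold invMulLog
  simpa [invMulLogDeriv, one_div, neg_div] using h

lemma invMulLogDeriv_neg {t : ℝ} (ht : 1 < t) : invMulLogDeriv t < 0 :=
  div_neg_of_neg_of_pos (by linarith [log_pos ht]) (pow_pos (mul_log_pos ht) 2)

lemma deriv_invMulLog_eventuallyEq {t : ℝ} (ht : 1 < t) :
    deriv invMulLog =ᶠ[𝓝 t] invMulLogDeriv := by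
  filter_upwards [Ioi_mem_nhds ht] with s hs using (hasDerivAt_invMulLog hs).deriv

lemma hasDerivAt_invMulLogDeriv {t : ℝ} (ht : 1 < t) :
    HasDerivAt invMulLogDeriv (invMulLogDeriv t * invMulLogDerivLogDeriv t) t := by
  have ht0 : t ≠ 0 := (one_pos.trans ht).ne'
  have hL : log t ≠ 0 := (log_pos ht).ne'
  have hL1 : log t + 1 ≠ 0 := by linarith [log_pos ht]
  have h := (((hasDerivAt_log ht0).add_const 1).fun_neg).fun_div
    ((hasDerivAt_mul_log ht0).fun_pow 2) (pow_ne_zero 2 (mul_log_pos ht).ne')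
  unfold invMulLogDeriv
  refine h.congr_deriv ?_
  unfold invMulLogDerivLogDeriv
  field_simp
  ring

lemma continuousOn_invMulLogDerivLogDeriv : ContinuousOn invMulLogDerivLogDeriv (Ioi 1) := by
  intro t ht
  have ht0 : t ≠ 0 := (one_pos.trans ht).ne'
  have hL1 : t * (log t + 1) ≠ 0 := mul_ne_zero ht0 (by linarith [log_pos ht])
  unfold invMulLogDerivLogDeriv
  exact (((continuousAt_id.mul ((continuousAt_log ht0).add continuousAt_const)).inv₀ hL1).sub
    (continuousAt_const.mul (continuousAt_id.inv₀ ht0))).sub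
    (continuousAt_const.mul ((continuous_mul_log.continuousAt).inv₀ (mul_log_pos ht).ne'))
    |>.continuousWithinAt

lemma tendsto_invMulLog_atTop : Tendsto invMulLog atTop (𝓝 0) :=
  (tendsto_inv_atTop_zero.comp tendsto_mul_log_atTop).congr fun _ => (one_div _).symm

lemma tendsto_invMulLogDeriv_atTop : Tendsto invMulLogDeriv atTop (𝓝 0) := by
  have h := (tendsto_inv_atTop_zero.add tendsto_invMulLog_atTop).neg.mul tendsto_invMulLog_atTop
  simp only [add_zero, neg_zero, zero_mul] at h
  refine h.congr' ?_
  filter_upwards [eventually_gt_atTop 1] with t ht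
  have ht0 : t ≠ 0 := (one_pos.trans ht).ne'
  have hL : log t ≠ 0 := (log_pos ht).ne'
  simp only [invMulLog, invMulLogDeriv]
  field_simp

lemma tendsto_invMulLogDerivLogDeriv_atTop : Tendsto invMulLogDerivLogDeriv atTop (𝓝 0) := by
  have h1 : Tendsto (fun t : ℝ => t * (log t + 1)) atTop atTop :=
    tendsto_id.atTop_mul_atTop₀ (tendsto_atTop_add_const_right _ 1 tendsto_log_atTop)
  have h2 : Tendsto (fun t : ℝ => (t * log t)⁻¹) atTop (𝓝 0) :=
    tendsto_mul_log_atTop.inv_tendsto_atTop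
  unfold invMulLogDerivLogDeriv
  simpa using
    (h1.inv_tendsto_atTop.sub (tendsto_inv_atTop_zero.const_mul 2)).sub (h2.const_mul 2)

section Inverse

variable {g : ℝ → ℝ}

lemma strictAntiOn_of_invOn_invMulLog (hg : MapsTo g (Ioi 0) (Ioi 1))
    (hinv : InvOn g invMulLog (Ioi 1) (Ioi 0)) : StrictAntiOn g (Ioi 0) :=
  hinv.2.strictAntiOn strictAntiOn_invMulLog hg

lemma image_eq_of_invOn_invMulLog (hg : MapsTo g (Ioi 0) (Ioi 1))
    (hinv : InvOn g invMulLog (Ioi 1) (Ioi 0)) : g '' Ioi 0 = Ioi 1 :=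
  (hinv.symm.bijOn hg mapsTo_invMulLog).image_eq

lemma continuousOn_of_invOn_invMulLog (hg : MapsTo g (Ioi 0) (Ioi 1))
    (hinv : InvOn g invMulLog (Ioi 1) (Ioi 0)) : ContinuousOn g (Ioi 0) := fun s hs =>
  ((strictAntiOn_of_invOn_invMulLog hg hinv).continuousAt_of_image_mem_nhds (Ioi_mem_nhds hs)
    (by rw [image_eq_of_invOn_invMulLog hg hinv]; exact Ioi_mem_nhds (hg hs))).continuousWithinAt

lemma hasDerivAt_of_invOn_invMulLog (hg : MapsTo g (Ioi 0) (Ioi 1))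
    (hinv : InvOn g invMulLog (Ioi 1) (Ioi 0)) {s : ℝ} (hs : 0 < s) :
    HasDerivAt g (invMulLogDeriv (g s))⁻¹ s :=
  HasDerivAt.of_local_left_inverse
    ((continuousOn_of_invOn_invMulLog hg hinv).continuousAt (Ioi_mem_nhds hs))
    (hasDerivAt_invMulLog (hg hs)) (invMulLogDeriv_neg (hg hs)).ne
    (eventually_of_mem (Ioi_mem_nhds hs) fun _ hy => hinv.2 hy)

lemma tendsto_nhdsGT_zero_of_invOn_invMulLog (hg : MapsTo g (Ioi 0) (Ioi 1))
    (hinv : InvOn g invMulLog (Ioi 1) (Ioi 0)) : Tendsto g (𝓝[>] 0) atTop :=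
  (strictAntiOn_of_invOn_invMulLog hg hinv).antitoneOn.tendsto_nhdsGT_atTop
    (by rw [image_eq_of_invOn_invMulLog hg hinv]; exact not_bddAbove_Ioi 1)

lemma hasDerivAt_deriv_invMulLog_comp (hg : MapsTo g (Ioi 0) (Ioi 1))
    (hinv : InvOn g invMulLog (Ioi 1) (Ioi 0)) (s : ℝ) (hs : 0 < s) :
    HasDerivAt (fun x => deriv invMulLog (g x)) (invMulLogDerivLogDeriv (g s)) s := by
  have h := ((hasDerivAt_invMulLogDeriv (hg hs)).congr_of_eventuallyEq
    (deriv_invMulLog_eventuallyEq (hg hs))).comp s (hasDerivAt_of_invOn_invMulLog hg hinv hs)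
  refine h.congr_deriv ?_
  field_simp [(invMulLogDeriv_neg (hg hs)).ne]

end Inverse

/-- Define `𝓕 : (1, ∞) → (0, ∞)` by `𝓕 t = 1 / (t log t)`. Then `𝓕` is
a strictly decreasing `C^∞` bijection of `(1, ∞)` onto `(0, ∞)`, and for any inverse
function `𝓕⁻¹ : (0, ∞) → (1, ∞)`, the function `b₂ : ℝ → ℝ` with `b₂ 0 = 0` and
`b₂ y = sgn(y) · 𝓕′(𝓕⁻¹ |y|)` for `y ≠ 0` is continuously differentiable on all of `ℝ`,
with `b₂′(0) = 0`. -/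
theorem stmt_18 (F : ℝ → ℝ) (hF : ∀ t : ℝ, F t = 1 / (t * Real.log t)) :
    StrictAntiOn F (Set.Ioi 1) ∧
    ContDiffOn ℝ (⊤ : ℕ∞) F (Set.Ioi 1) ∧
    Set.BijOn F (Set.Ioi 1) (Set.Ioi 0) ∧
    ∀ Finv : ℝ → ℝ, Set.MapsTo Finv (Set.Ioi 0) (Set.Ioi 1) →
      Set.InvOn Finv F (Set.Ioi 1) (Set.Ioi 0) →
      ∀ b₂ : ℝ → ℝ, b₂ 0 = 0 →
        (∀ y : ℝ, y ≠ 0 → b₂ y = Real.sign y * deriv F (Finv |y|)) →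
        ContDiff ℝ 1 b₂ ∧ deriv b₂ 0 = 0 := by
  obtain rfl : F = invMulLog := funext hF
  refine ⟨strictAntiOn_invMulLog, contDiffOn_invMulLog, bijOn_invMulLog,
    fun Finv hmaps hinv b₂ hb0 hb => ?_⟩
  have hFinv := tendsto_nhdsGT_zero_of_invOn_invMulLog hmaps hinv
  have hb₂ := contDiff_one_of_eq_sign_mul_abs (hasDerivAt_deriv_invMulLog_comp hmaps hinv)
    (continuousOn_invMulLogDerivLogDeriv.comp (continuousOn_of_invOn_invMulLog hmaps hinv) hmaps)
    ((tendsto_invMulLogDeriv_atTop.comp hFinv).congr' ?_)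
    (tendsto_invMulLogDerivLogDeriv_atTop.comp hFinv) hb0 hb
  · exact ⟨hb₂.1, hb₂.2.deriv⟩
  · filter_upwards [self_mem_nhdsWithin] with s (hs : 0 < s)
    exact ((deriv_invMulLog_eventuallyEq (hmaps hs)).eq_of_nhds).symm
end

section
/- Let (f^t)_{t ∈ ℝ} be the rotation flow on ℝ² given by f^t(x, y) = (x cos t − y sin t, x sin t + y cos t) (the flow generated by the vector field (ẋ, ẏ) = (−y, x)). Then for every r > 0, the circle C_r = {(x, y) : x² + y² = r²} is a nonempty compact invariant set that is stable via orbit-tracking but is not an attractor via orbit-tracking. -/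
/-!
Every `f t` is a Euclidean isometry, so `f t x` stays within `ε` of `f t y` for all `t` exactly
when `x` is within `ε` of `y`. Radial projection puts every point of the annulus
`|‖x‖ - r| < ε` within `ε` of the circle, which gives stability. Conversely, a neighbourhood
that orbit-tracks the circle for every `ε` lies in its closure, i.e. in the circle itself,
which is impossible because the circle has empty interior.
-/

open Filter Topology Set Metric Real

section IsometricFlow

variable {X : Type*} [MetricSpace X] {f : ℝ → X → X} {U A : Set X}

theorem orbitTracks_of_isometry (hf : ∀ t, Isometry (f t)) {ε : ℝ}
    (h : ∀ x ∈ U, ∃ y ∈ A, dist x y < ε) : OrbitTracks f U A ε :=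
  ⟨0, le_rfl, fun x hx ↦ (h x hx).imp fun y ⟨hy, hxy⟩ ↦
    ⟨hy, fun t _ ↦ (hf t).dist_eq x y ▸ hxy⟩⟩

theorem subset_closure_of_forall_orbitTracks (hf : ∀ t, Isometry (f t))
    (h : ∀ ε > 0, OrbitTracks f U A ε) : U ⊆ closure A := by
  intro x hx
  refine Metric.mem_closure_iff.2 fun ε hε ↦ ?_
  obtain ⟨T, -, htrack⟩ := h ε hε
  obtain ⟨y, hy, hxy⟩ := htrack x hx
  exact ⟨y, hy, (hf T).dist_eq x y ▸ hxy T le_rfl⟩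

end IsometricFlow

theorem exists_mem_sphere_dist_eq {E : Type*} [NormedAddCommGroup E] [NormedSpace ℝ E]
    [Nontrivial E] (x : E) {r : ℝ} (hr : 0 ≤ r) :
    ∃ y ∈ sphere (0 : E) r, dist x y = |‖x‖ - r| := by
  rcases eq_or_ne x 0 with rfl | hx
  · obtain ⟨y, hy⟩ := (NormedSpace.sphere_nonempty (x := (0 : E))).2 hr
    refine ⟨y, hy, ?_⟩
    rw [mem_sphere_zero_iff_norm] at hy
    simp [hy, abs_of_nonneg hr]
  · have hx' : ‖x‖ ≠ 0 := norm_ne_zero_iff.2 hx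
    refine ⟨(r / ‖x‖) • x, ?_, ?_⟩
    · simp [norm_smul, abs_of_nonneg hr, hx']
    · calc dist x ((r / ‖x‖) • x) = ‖(1 - r / ‖x‖) • x‖ := by
            rw [dist_eq_norm, sub_smul, one_smul]
        _ = |(1 - r / ‖x‖) * ‖x‖| := by rw [norm_smul, Real.norm_eq_abs, abs_mul, abs_norm]
        _ = |‖x‖ - r| := by rw [sub_mul, one_mul, div_mul_cancel₀ _ hx']

def IsRotationFlow (f : ℝ → EuclideanSpace ℝ (Fin 2) → EuclideanSpace ℝ (Fin 2)) : Prop :=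
  ∀ (t : ℝ) (p : EuclideanSpace ℝ (Fin 2)),
    f t p = ![p 0 * Real.cos t - p 1 * Real.sin t, p 0 * Real.sin t + p 1 * Real.cos t]

theorem EuclideanSpace.setOf_sq_add_sq_eq {r : ℝ} (hr : 0 ≤ r) :
    {p : EuclideanSpace ℝ (Fin 2) | p 0 ^ 2 + p 1 ^ 2 = r ^ 2} = sphere 0 r := by
  ext p
  rw [mem_ofPred_eq, mem_sphere_zero_iff_norm, ← sq_eq_sq₀ (norm_nonneg p) hr,
    EuclideanSpace.real_norm_sq_eq, Fin.sum_univ_two]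

namespace IsRotationFlow

variable {f : ℝ → EuclideanSpace ℝ (Fin 2) → EuclideanSpace ℝ (Fin 2)}

theorem apply_zero (hf : IsRotationFlow f) (t : ℝ) (p : EuclideanSpace ℝ (Fin 2)) :
    f t p 0 = p 0 * Real.cos t - p 1 * Real.sin t := by
  rw [hf]; rfl

theorem apply_one (hf : IsRotationFlow f) (t : ℝ) (p : EuclideanSpace ℝ (Fin 2)) :
    f t p 1 = p 0 * Real.sin t + p 1 * Real.cos t := by
  rw [hf]; rfl

theorem norm_apply (hf : IsRotationFlow f) (t : ℝ) (p : EuclideanSpace ℝ (Fin 2)) :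
    ‖f t p‖ = ‖p‖ := by
  rw [← sq_eq_sq₀ (norm_nonneg _) (norm_nonneg _), EuclideanSpace.real_norm_sq_eq,
    EuclideanSpace.real_norm_sq_eq, Fin.sum_univ_two, Fin.sum_univ_two, hf.apply_zero,
    hf.apply_one]
  linear_combination (p 0 ^ 2 + p 1 ^ 2) * sin_sq_add_cos_sq t

theorem map_sub (hf : IsRotationFlow f) (t : ℝ) (p q : EuclideanSpace ℝ (Fin 2)) :
    f t p - f t q = f t (p - q) := by
  ext i
  fin_cases i <;>
    simp only [Fin.zero_eta, Fin.mk_one, Fin.isValue, PiLp.sub_apply, hf.apply_zero,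
      hf.apply_one] <;> ring

theorem isometry (hf : IsRotationFlow f) (t : ℝ) : Isometry (f t) :=
  Isometry.of_dist_eq fun p q ↦ by rw [dist_eq_norm, dist_eq_norm, hf.map_sub, hf.norm_apply]

theorem apply_apply_neg (hf : IsRotationFlow f) (t : ℝ) (p : EuclideanSpace ℝ (Fin 2)) :
    f t (f (-t) p) = p := by
  ext i
  fin_cases i <;>
    simp only [Fin.zero_eta, Fin.mk_one, Fin.isValue, hf.apply_zero, hf.apply_one, cos_neg,
      sin_neg, mul_neg, sub_neg_eq_add]
  · linear_combination p 0 * sin_sq_add_cos_sq t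
  · linear_combination p 1 * sin_sq_add_cos_sq t

theorem image_sphere (hf : IsRotationFlow f) (t r : ℝ) : f t '' sphere 0 r = sphere 0 r := by
  have hpre : f t ⁻¹' sphere 0 r = sphere 0 r := by
    ext p
    simp only [mem_preimage, mem_sphere_zero_iff_norm, hf.norm_apply]
  rw [← hpre, image_preimage_eq _ fun p ↦ ⟨f (-t) p, hf.apply_apply_neg t p⟩, hpre]

end IsRotationFlow

/-- Let `(f^t)_{t ∈ ℝ}` be the rotation flow on `ℝ²` (with the
Euclidean distance), `f^t (x, y) = (x cos t − y sin t, x sin t + y cos t)`. Then for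
every `r > 0`, the circle `C_r = {(x, y) : x² + y² = r²}` is a nonempty compact
invariant set that is stable via orbit-tracking but is not an attractor via
orbit-tracking. -/
theorem stmt_19 (f : ℝ → EuclideanSpace ℝ (Fin 2) → EuclideanSpace ℝ (Fin 2))
    (hf : ∀ (t : ℝ) (p : EuclideanSpace ℝ (Fin 2)),
      f t p = ![p 0 * Real.cos t - p 1 * Real.sin t,
                p 0 * Real.sin t + p 1 * Real.cos t])
    (r : ℝ) (hr : 0 < r) :
    (({p : EuclideanSpace ℝ (Fin 2) | p 0 ^ 2 + p 1 ^ 2 = r ^ 2} : Set _).Nonempty) ∧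
    IsCompact {p : EuclideanSpace ℝ (Fin 2) | p 0 ^ 2 + p 1 ^ 2 = r ^ 2} ∧
    (∀ t : ℝ, 0 ≤ t →
      f t '' {p : EuclideanSpace ℝ (Fin 2) | p 0 ^ 2 + p 1 ^ 2 = r ^ 2} =
        {p : EuclideanSpace ℝ (Fin 2) | p 0 ^ 2 + p 1 ^ 2 = r ^ 2}) ∧
    (∀ ε : ℝ, 0 < ε → ∃ U : Set (EuclideanSpace ℝ (Fin 2)),
      (∃ V : Set (EuclideanSpace ℝ (Fin 2)), IsOpen V ∧
        {p : EuclideanSpace ℝ (Fin 2) | p 0 ^ 2 + p 1 ^ 2 = r ^ 2} ⊆ V ∧ V ⊆ U) ∧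
      OrbitTracks f U {p : EuclideanSpace ℝ (Fin 2) | p 0 ^ 2 + p 1 ^ 2 = r ^ 2} ε) ∧
    ¬ (∃ U : Set (EuclideanSpace ℝ (Fin 2)),
      (∃ V : Set (EuclideanSpace ℝ (Fin 2)), IsOpen V ∧
        {p : EuclideanSpace ℝ (Fin 2) | p 0 ^ 2 + p 1 ^ 2 = r ^ 2} ⊆ V ∧ V ⊆ U) ∧
      ∀ ε : ℝ, 0 < ε →
        OrbitTracks f U {p : EuclideanSpace ℝ (Fin 2) | p 0 ^ 2 + p 1 ^ 2 = r ^ 2} ε) := by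
  have hrot : IsRotationFlow f := hf
  rw [EuclideanSpace.setOf_sq_add_sq_eq hr.le]
  have hne : (sphere (0 : EuclideanSpace ℝ (Fin 2)) r).Nonempty :=
    NormedSpace.sphere_nonempty.2 hr.le
  refine ⟨hne, isCompact_sphere 0 r, fun t _ ↦ hrot.image_sphere t r, fun ε hε ↦ ?_, ?_⟩
  · set annulus : Set (EuclideanSpace ℝ (Fin 2)) := (‖·‖) ⁻¹' ball r ε
    have hopen : IsOpen annulus := isOpen_ball.preimage continuous_norm
    have hsub : sphere 0 r ⊆ annulus := fun p hp ↦ by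
      simpa [annulus, mem_sphere_zero_iff_norm.1 hp] using hε
    refine ⟨annulus, ⟨annulus, hopen, hsub, subset_rfl⟩,
      orbitTracks_of_isometry hrot.isometry fun x hx ↦ ?_⟩
    obtain ⟨y, hy, hxy⟩ := exists_mem_sphere_dist_eq x hr.le
    exact ⟨y, hy, hxy ▸ hx⟩
  · rintro ⟨U, ⟨V, hV, hCV, hVU⟩, hU⟩
    have hVC : V ⊆ sphere 0 r := (hVU.trans (subset_closure_of_forall_orbitTracks
      hrot.isometry hU)).trans isClosed_sphere.closure_subset
    obtain ⟨p, hp⟩ := hne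
    simpa using interior_maximal hVC hV (hCV hp)
end
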